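/- arXiv:2404.03971 — 8 statements merged into one kernel-verified Lean document; each statement's English description precedes it below -/
import Mathlib

section
/- Let C be a category and let X : [1] × [1] × [1] ⥤ C be a commutative cube in C. Assume that the pullbacks P₀ = X(0,1,0) ×_{X(1,1,0)} X(1,0,0) and P₁ = X(0,1,1) ×_{X(1,1,1)} X(1,0,1) exist in C. Then X is a limit cube — i.e. the cone with apex X(0,0,0), given by the structure maps of X, is a limit cone over the restriction of X to the punctured cube — if and only if the commutative square whose top edge is X((0,0,0) → (0,0,1)), whose bottom edge is the map P₀ → P₁ induced by functoriality of X, and whose vertical edges are the maps X(0,0,0) → P₀ and X(0,0,1) → P₁ induced by the structure maps of the cube, is a pullback square in C. -/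
/-
A cone over the punctured cube is determined by its legs to the three vertices `(0,1,0)`,
`(1,0,0)`, `(0,0,1)` adjacent to `(0,0,0)`, because every other vertex lies above one of them;
conversely, three such maps form a cone exactly when they agree pairwise over `(1,1,0)`,
`(0,1,1)` and `(1,0,1)`. So `X` is a limit cube iff `X (0,0,0)` is the limit of these three
cospans. The pullback square expresses the same universal property: a map into `P₀` is a pair
of maps agreeing over `(1,1,0)`, and commuting over `P₁` is agreeing over `(0,1,1)` and `(1,0,1)`.
-/

open CategoryTheory CategoryTheory.Limits

universe v u

/-- The cube category `[1] × [1] × [1]`, realized as the poset `Fin 2 × Fin 2 × Fin 2`. -/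
def Cube : Type := Fin 2 × Fin 2 × Fin 2

instance : Preorder Cube := inferInstanceAs (Preorder (Fin 2 × Fin 2 × Fin 2))

instance : DecidableRel (α := Cube) (· ≤ ·) :=
  inferInstanceAs (DecidableRel (α := Fin 2 × Fin 2 × Fin 2) (· ≤ ·))

instance : SmallCategory Cube := Preorder.smallCategory Cube

instance Cube.homSubsingleton {p q : Cube} : Subsingleton (p ⟶ q) :=
  ⟨fun f g => by apply ULift.ext; apply Subsingleton.elim⟩

/-- An object of the cube category. -/
def Cube.mk (a b c : Fin 2) : Cube := (a, b, c)

variable {C : Type u} [Category.{v} C]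

/-- The structure map of a cube `X : [1]×[1]×[1] ⥤ C` from vertex `(a,b,c)` to
vertex `(a',b',c')`. -/
def cubeEdge (X : Cube ⥤ C) (a b c a' b' c' : Fin 2)
    (h : Cube.mk a b c ≤ Cube.mk a' b' c' := by decide) :
    X.obj (Cube.mk a b c) ⟶ X.obj (Cube.mk a' b' c') :=
  X.map (homOfLE h)


lemma cubeEdge_comp (X : Cube ⥤ C) (a b c a' b' c' a'' b'' c'' : Fin 2)
    (h : Cube.mk a b c ≤ Cube.mk a' b' c') (h' : Cube.mk a' b' c' ≤ Cube.mk a'' b'' c'') :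
    cubeEdge X a b c a' b' c' h ≫ cubeEdge X a' b' c' a'' b'' c'' h' =
      cubeEdge X a b c a'' b'' c'' (h.trans h') := by
  unfold cubeEdge
  rw [← X.map_comp, homOfLE_comp]

/-- The cone with apex `X (0,0,0)` over the restriction of a cube `X : [1]×[1]×[1] ⥤ C` to the
punctured cube (the full subcategory on the seven objects other than `(0,0,0)`), whose legs are
the structure maps of the cube. -/
@[simps]
def cubeCone (X : Cube ⥤ C) :
    Cone (ObjectProperty.ι (fun p : Cube => p ≠ Cube.mk 0 0 0) ⋙ X) where
  pt := X.obj (Cube.mk 0 0 0)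
  π :=
    { app := fun p => X.map (homOfLE (show Cube.mk 0 0 0 ≤ p.obj from
        ⟨Fin.zero_le _, Fin.zero_le _, Fin.zero_le _⟩))
      naturality := fun p q f => by
        dsimp
        rw [Category.id_comp, ← X.map_comp]
        exact congrArg X.map (Subsingleton.elim _ _) }

theorem CategoryTheory.CommSq.isPullback_iff_existsUnique {P X Y Z : C} {fst : P ⟶ X}
    {snd : P ⟶ Y} {f : X ⟶ Z} {g : Y ⟶ Z} (w : CommSq fst snd f g) :
    IsPullback fst snd f g ↔ ∀ ⦃W : C⦄ (h : W ⟶ X) (k : W ⟶ Y), h ≫ f = k ≫ g →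
      ∃! l : W ⟶ P, l ≫ fst = h ∧ l ≫ snd = k := by
  constructor
  · intro hP W h k hw
    exact ⟨hP.lift h k hw, ⟨hP.lift_fst h k hw, hP.lift_snd h k hw⟩,
      fun l hl => hP.hom_ext (by rw [hl.1, hP.lift_fst]) (by rw [hl.2, hP.lift_snd])⟩
  · intro H
    choose lift hlift huniq using fun s : PullbackCone f g => H s.fst s.snd s.condition
    exact IsPullback.of_isLimit' w (PullbackCone.IsLimit.mk w.w lift (fun s => (hlift s).1)
      (fun s => (hlift s).2) (fun s m hm₁ hm₂ => huniq s m ⟨hm₁, hm₂⟩))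

theorem CategoryTheory.Limits.pullback.comp_lift_eq_iff {A B₁ B₂ C₁₂ W : C} {u₁ : B₁ ⟶ C₁₂}
    {u₂ : B₂ ⟶ C₁₂} [HasPullback u₁ u₂] {a₁ : A ⟶ B₁} {a₂ : A ⟶ B₂} (h : a₁ ≫ u₁ = a₂ ≫ u₂)
    (l : W ⟶ A) (g : W ⟶ pullback u₁ u₂) :
    l ≫ pullback.lift a₁ a₂ h = g ↔
      l ≫ a₁ = g ≫ pullback.fst _ _ ∧ l ≫ a₂ = g ≫ pullback.snd _ _ := by
  simp only [pullback.hom_ext_iff, Category.assoc, pullback.lift_fst, pullback.lift_snd]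

section TripleFiberProduct

variable {A B₁ B₂ B₃ C₁₂ C₁₃ C₂₃ : C}

def IsTripleFiberProduct (a₁ : A ⟶ B₁) (a₂ : A ⟶ B₂) (a₃ : A ⟶ B₃)
    (u₁ : B₁ ⟶ C₁₂) (u₂ : B₂ ⟶ C₁₂) (v₁ : B₁ ⟶ C₁₃) (v₃ : B₃ ⟶ C₁₃)
    (w₂ : B₂ ⟶ C₂₃) (w₃ : B₃ ⟶ C₂₃) : Prop :=
  ∀ ⦃W : C⦄ (f₁ : W ⟶ B₁) (f₂ : W ⟶ B₂) (f₃ : W ⟶ B₃),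
    f₁ ≫ u₁ = f₂ ≫ u₂ → f₁ ≫ v₁ = f₃ ≫ v₃ → f₂ ≫ w₂ = f₃ ≫ w₃ →
      ∃! m : W ⟶ A, m ≫ a₁ = f₁ ∧ m ≫ a₂ = f₂ ∧ m ≫ a₃ = f₃

theorem isPullback_pullbackLift_iff_isTripleFiberProduct {D : C}
    {a₁ : A ⟶ B₁} {a₂ : A ⟶ B₂} {a₃ : A ⟶ B₃} {u₁ : B₁ ⟶ C₁₂} {u₂ : B₂ ⟶ C₁₂}
    {v₁ : B₁ ⟶ C₁₃} {v₃ : B₃ ⟶ C₁₃} {w₂ : B₂ ⟶ C₂₃} {w₃ : B₃ ⟶ C₂₃}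
    {d₁₂ : C₁₂ ⟶ D} {d₁₃ : C₁₃ ⟶ D} {d₂₃ : C₂₃ ⟶ D} [HasPullback u₁ u₂] [HasPullback d₁₃ d₂₃]
    (h₁₂ : a₁ ≫ u₁ = a₂ ≫ u₂) (h₁₃ : a₁ ≫ v₁ = a₃ ≫ v₃) (h₂₃ : a₂ ≫ w₂ = a₃ ≫ w₃)
    (hu₁ : u₁ ≫ d₁₂ = v₁ ≫ d₁₃) (hu₂ : u₂ ≫ d₁₂ = w₂ ≫ d₂₃) (hd : v₃ ≫ d₁₃ = w₃ ≫ d₂₃) :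
    IsPullback (pullback.lift a₁ a₂ h₁₂) a₃ (pullback.map u₁ u₂ d₁₃ d₂₃ v₁ w₂ d₁₂ hu₁ hu₂)
        (pullback.lift v₃ w₃ hd) ↔
      IsTripleFiberProduct a₁ a₂ a₃ u₁ u₂ v₁ v₃ w₂ w₃ := by
  have hcomm : ∀ {W : C} (g : W ⟶ pullback u₁ u₂) (f₃ : W ⟶ B₃),
      g ≫ pullback.map u₁ u₂ d₁₃ d₂₃ v₁ w₂ d₁₂ hu₁ hu₂ = f₃ ≫ pullback.lift v₃ w₃ hd ↔
        (g ≫ pullback.fst _ _) ≫ v₁ = f₃ ≫ v₃ ∧ (g ≫ pullback.snd _ _) ≫ w₂ = f₃ ≫ w₃ := by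
    intro W g f₃
    simp only [pullback.hom_ext_iff, pullback.map, Category.assoc, pullback.lift_fst,
      pullback.lift_snd]
  rw [(CommSq.mk ((hcomm _ _).mpr ⟨by rwa [pullback.lift_fst], by rwa [pullback.lift_snd]⟩)
    ).isPullback_iff_existsUnique]
  constructor
  · intro H W f₁ f₂ f₃ hf₁₂ hf₁₃ hf₂₃
    simpa only [pullback.comp_lift_eq_iff, pullback.lift_fst, pullback.lift_snd, and_assoc] using
      H (pullback.lift f₁ f₂ hf₁₂) f₃
        ((hcomm _ _).mpr ⟨by rwa [pullback.lift_fst], by rwa [pullback.lift_snd]⟩)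
  · intro H W g f₃ hg
    simpa only [pullback.comp_lift_eq_iff, and_assoc] using
      H (g ≫ pullback.fst _ _) (g ≫ pullback.snd _ _) f₃
        (by rw [Category.assoc, Category.assoc, pullback.condition])
        ((hcomm g f₃).mp hg).1 ((hcomm g f₃).mp hg).2

end TripleFiberProduct

lemma CategoryTheory.Functor.comp_map_homOfLE_eq_of_le {J : Type*} [Preorder J] (F : J ⥤ C)
    {i i' k l : J} (hik : i ≤ k) (hi'k : i' ≤ k) (hkl : k ≤ l) {W : C} {f : W ⟶ F.obj i}
    {f' : W ⟶ F.obj i'}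
    (h : f ≫ F.map (homOfLE hik) = f' ≫ F.map (homOfLE hi'k)) :
    f ≫ F.map (homOfLE (hik.trans hkl)) = f' ≫ F.map (homOfLE (hi'k.trans hkl)) := by
  rw [← homOfLE_comp hik hkl, ← homOfLE_comp hi'k hkl, F.map_comp, F.map_comp, reassoc_of% h]

lemma CategoryTheory.Limits.Cone.comp_π_app_eq_of_hom {J : Type*} [Category J] {F : J ⥤ C}
    (c s : Cone F) (m : s.pt ⟶ c.pt) {j j' : J} (f : j ⟶ j') (h : m ≫ c.π.app j = s.π.app j) :
    m ≫ c.π.app j' = s.π.app j' := by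
  rw [← c.w f, ← s.w f, reassoc_of% h]

instance : DecidableEq Cube := inferInstanceAs (DecidableEq (Fin 2 × Fin 2 × Fin 2))

instance : Fintype Cube := inferInstanceAs (Fintype (Fin 2 × Fin 2 × Fin 2))

lemma Cube.atom_le_of_ne_zero : ∀ {p : Cube}, p ≠ Cube.mk 0 0 0 →
    Cube.mk 0 1 0 ≤ p ∨ Cube.mk 1 0 0 ≤ p ∨ Cube.mk 0 0 1 ≤ p := by
  decide

abbrev PuncturedCube : Type := ObjectProperty.FullSubcategory (fun p : Cube => p ≠ Cube.mk 0 0 0)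

abbrev puncturedDiagram (X : Cube ⥤ C) : PuncturedCube ⥤ C :=
  ObjectProperty.ι (fun p : Cube => p ≠ Cube.mk 0 0 0) ⋙ X

abbrev PuncturedCube.mk (a b c : Fin 2) (h : Cube.mk a b c ≠ Cube.mk 0 0 0 := by decide) :
    PuncturedCube :=
  ⟨Cube.mk a b c, h⟩

section PuncturedCone

variable {X : Cube ⥤ C}

lemma cone_π_app_comp_cubeEdge (s : Cone (puncturedDiagram X)) (a b c a' b' c' : Fin 2)
    (h : Cube.mk a b c ≠ Cube.mk 0 0 0 := by decide)
    (h' : Cube.mk a' b' c' ≠ Cube.mk 0 0 0 := by decide)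
    (hle : Cube.mk a b c ≤ Cube.mk a' b' c' := by decide) :
    s.π.app (PuncturedCube.mk a b c h) ≫ cubeEdge X a b c a' b' c' hle =
      s.π.app (PuncturedCube.mk a' b' c' h') :=
  s.w (j := .mk a b c h) (j' := .mk a' b' c' h') (ObjectProperty.homMk (homOfLE hle))

lemma comp_cubeCone_π_app_eq_iff (s : Cone (puncturedDiagram X))
    (m : s.pt ⟶ X.obj (Cube.mk 0 0 0)) :
    (∀ j, m ≫ (cubeCone X).π.app j = s.π.app j) ↔
      m ≫ cubeEdge X 0 0 0 0 1 0 = s.π.app (PuncturedCube.mk 0 1 0) ∧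
      m ≫ cubeEdge X 0 0 0 1 0 0 = s.π.app (PuncturedCube.mk 1 0 0) ∧
      m ≫ cubeEdge X 0 0 0 0 0 1 = s.π.app (PuncturedCube.mk 0 0 1) := by
  refine ⟨fun h => ⟨h (PuncturedCube.mk 0 1 0), h (PuncturedCube.mk 1 0 0),
    h (PuncturedCube.mk 0 0 1)⟩, fun ⟨h₁, h₂, h₃⟩ j => ?_⟩
  have above : ∀ i : PuncturedCube, m ≫ (cubeCone X).π.app i = s.π.app i → i.obj ≤ j.obj →
      m ≫ (cubeCone X).π.app j = s.π.app j := fun i hi hij =>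
    (cubeCone X).comp_π_app_eq_of_hom s m (ObjectProperty.homMk (homOfLE hij)) hi
  rcases Cube.atom_le_of_ne_zero j.property with hj | hj | hj
  exacts [above (PuncturedCube.mk 0 1 0) h₁ hj, above (PuncturedCube.mk 1 0 0) h₂ hj,
    above (PuncturedCube.mk 0 0 1) h₃ hj]

variable {W : C} (f₁ : W ⟶ X.obj (Cube.mk 0 1 0)) (f₂ : W ⟶ X.obj (Cube.mk 1 0 0))
  (f₃ : W ⟶ X.obj (Cube.mk 0 0 1))

def puncturedConeLeg (p : Cube) (hp : p ≠ Cube.mk 0 0 0) : W ⟶ X.obj p :=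
  if h₁ : Cube.mk 0 1 0 ≤ p then f₁ ≫ X.map (homOfLE h₁)
  else if h₂ : Cube.mk 1 0 0 ≤ p then f₂ ≫ X.map (homOfLE h₂)
  else f₃ ≫ X.map (homOfLE (((Cube.atom_le_of_ne_zero hp).resolve_left h₁).resolve_left h₂))

variable {f₁ f₂ f₃}

lemma puncturedConeLeg_of_le₁ {p : Cube} (hp : p ≠ Cube.mk 0 0 0) (h : Cube.mk 0 1 0 ≤ p) :
    puncturedConeLeg f₁ f₂ f₃ p hp = f₁ ≫ X.map (homOfLE h) :=
  dif_pos h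

lemma puncturedConeLeg_of_le₂ (h₁₂ : f₁ ≫ cubeEdge X 0 1 0 1 1 0 = f₂ ≫ cubeEdge X 1 0 0 1 1 0)
    {p : Cube} (hp : p ≠ Cube.mk 0 0 0) (h : Cube.mk 1 0 0 ≤ p) :
    puncturedConeLeg f₁ f₂ f₃ p hp = f₂ ≫ X.map (homOfLE h) := by
  by_cases h₁ : Cube.mk 0 1 0 ≤ p
  · rw [puncturedConeLeg_of_le₁ hp h₁]
    exact X.comp_map_homOfLE_eq_of_le _ _ (show Cube.mk 1 1 0 ≤ p from ⟨h.1, h₁.2⟩) h₁₂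
  · exact (dif_neg h₁).trans (dif_pos h)

lemma puncturedConeLeg_of_le₃ (h₁₃ : f₁ ≫ cubeEdge X 0 1 0 0 1 1 = f₃ ≫ cubeEdge X 0 0 1 0 1 1)
    (h₂₃ : f₂ ≫ cubeEdge X 1 0 0 1 0 1 = f₃ ≫ cubeEdge X 0 0 1 1 0 1)
    {p : Cube} (hp : p ≠ Cube.mk 0 0 0) (h : Cube.mk 0 0 1 ≤ p) :
    puncturedConeLeg f₁ f₂ f₃ p hp = f₃ ≫ X.map (homOfLE h) := by
  by_cases h₁ : Cube.mk 0 1 0 ≤ p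
  · rw [puncturedConeLeg_of_le₁ hp h₁]
    exact X.comp_map_homOfLE_eq_of_le _ _ (show Cube.mk 0 1 1 ≤ p from ⟨h₁.1, h₁.2.1, h.2.2⟩) h₁₃
  by_cases h₂ : Cube.mk 1 0 0 ≤ p
  · rw [puncturedConeLeg, dif_neg h₁, dif_pos h₂]
    exact X.comp_map_homOfLE_eq_of_le _ _ (show Cube.mk 1 0 1 ≤ p from ⟨h₂.1, h₂.2.1, h.2.2⟩) h₂₃
  · exact (dif_neg h₁).trans (dif_neg h₂)

variable (h₁₂ : f₁ ≫ cubeEdge X 0 1 0 1 1 0 = f₂ ≫ cubeEdge X 1 0 0 1 1 0)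
  (h₁₃ : f₁ ≫ cubeEdge X 0 1 0 0 1 1 = f₃ ≫ cubeEdge X 0 0 1 0 1 1)
  (h₂₃ : f₂ ≫ cubeEdge X 1 0 0 1 0 1 = f₃ ≫ cubeEdge X 0 0 1 1 0 1)
include h₁₂ h₁₃ h₂₃

lemma puncturedConeLeg_comp_map {p q : Cube} (hp : p ≠ Cube.mk 0 0 0) (hq : q ≠ Cube.mk 0 0 0)
    (hpq : p ≤ q) :
    puncturedConeLeg f₁ f₂ f₃ p hp ≫ X.map (homOfLE hpq) = puncturedConeLeg f₁ f₂ f₃ q hq := by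
  rcases Cube.atom_le_of_ne_zero hp with h | h | h
  · rw [puncturedConeLeg_of_le₁ hp h, puncturedConeLeg_of_le₁ hq (h.trans hpq), Category.assoc,
      ← X.map_comp, homOfLE_comp]
  · rw [puncturedConeLeg_of_le₂ h₁₂ hp h, puncturedConeLeg_of_le₂ h₁₂ hq (h.trans hpq),
      Category.assoc, ← X.map_comp, homOfLE_comp]
  · rw [puncturedConeLeg_of_le₃ h₁₃ h₂₃ hp h, puncturedConeLeg_of_le₃ h₁₃ h₂₃ hq (h.trans hpq),
      Category.assoc, ← X.map_comp, homOfLE_comp]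

@[simps]
def puncturedCone : Cone (puncturedDiagram X) where
  pt := W
  π :=
    { app := fun p => puncturedConeLeg f₁ f₂ f₃ p.obj p.property
      naturality := fun p q g =>
        (Category.id_comp _).trans
          (puncturedConeLeg_comp_map h₁₂ h₁₃ h₂₃ p.property q.property (leOfHom g.hom)).symm }

lemma puncturedCone_π_app_atoms :
    (puncturedCone h₁₂ h₁₃ h₂₃).π.app (PuncturedCube.mk 0 1 0) = f₁ ∧
      (puncturedCone h₁₂ h₁₃ h₂₃).π.app (PuncturedCube.mk 1 0 0) = f₂ ∧
      (puncturedCone h₁₂ h₁₃ h₂₃).π.app (PuncturedCube.mk 0 0 1) = f₃ := by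
  simp only [puncturedCone_π_app, puncturedConeLeg_of_le₁ _ le_rfl,
    puncturedConeLeg_of_le₂ h₁₂ _ le_rfl, puncturedConeLeg_of_le₃ h₁₃ h₂₃ _ le_rfl, homOfLE_refl,
    X.map_id, Category.comp_id]
  exact ⟨rfl, rfl, rfl⟩

end PuncturedCone

theorem nonempty_isLimit_cubeCone_iff_isTripleFiberProduct (X : Cube ⥤ C) :
    Nonempty (IsLimit (cubeCone X)) ↔
      IsTripleFiberProduct (cubeEdge X 0 0 0 0 1 0) (cubeEdge X 0 0 0 1 0 0)
        (cubeEdge X 0 0 0 0 0 1) (cubeEdge X 0 1 0 1 1 0) (cubeEdge X 1 0 0 1 1 0)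
        (cubeEdge X 0 1 0 0 1 1) (cubeEdge X 0 0 1 0 1 1) (cubeEdge X 1 0 0 1 0 1)
        (cubeEdge X 0 0 1 1 0 1) := by
  constructor
  · rintro ⟨hL⟩ W f₁ f₂ f₃ h₁₂ h₁₃ h₂₃
    obtain ⟨e₁, e₂, e₃⟩ := puncturedCone_π_app_atoms h₁₂ h₁₃ h₂₃
    have := (existsUnique_congr (comp_cubeCone_π_app_eq_iff _)).mp
      (hL.existsUnique (puncturedCone h₁₂ h₁₃ h₂₃))
    rwa [e₁, e₂, e₃] at this
  · intro H
    exact ⟨IsLimit.ofExistsUnique fun s => (existsUnique_congr (comp_cubeCone_π_app_eq_iff s)).mpr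
      (H _ _ _
        ((cone_π_app_comp_cubeEdge s 0 1 0 1 1 0).trans
          (cone_π_app_comp_cubeEdge s 1 0 0 1 1 0).symm)
        ((cone_π_app_comp_cubeEdge s 0 1 0 0 1 1).trans
          (cone_π_app_comp_cubeEdge s 0 0 1 0 1 1).symm)
        ((cone_π_app_comp_cubeEdge s 1 0 0 1 0 1).trans
          (cone_π_app_comp_cubeEdge s 0 0 1 1 0 1).symm))⟩

/-- A commutative cube `X : [1]×[1]×[1] ⥤ C` is a limit cube — i.e. the cone with apex
`X (0,0,0)` given by the structure maps of `X` is a limit cone over the restriction of `X` to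
the punctured cube — if and only if the square
```
X (0,0,0) ------------> X (0,0,1)
   |                        |
   ↓                        ↓
  P₀ --------------------> P₁
```
is a pullback square, where `P₀ = X (0,1,0) ×_{X (1,1,0)} X (1,0,0)` and
`P₁ = X (0,1,1) ×_{X (1,1,1)} X (1,0,1)`, the vertical maps are induced by the structure maps
of the cube, and the bottom map is induced by functoriality of `X`. -/
theorem cube_isLimit_iff_isPullback (X : Cube ⥤ C)
    [HasPullback (cubeEdge X 0 1 0 1 1 0) (cubeEdge X 1 0 0 1 1 0)]
    [HasPullback (cubeEdge X 0 1 1 1 1 1) (cubeEdge X 1 0 1 1 1 1)] :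
    Nonempty (IsLimit (cubeCone X)) ↔
      IsPullback
        -- the left edge `X (0,0,0) ⟶ P₀` induced by the structure maps of the cube
        (pullback.lift (cubeEdge X 0 0 0 0 1 0) (cubeEdge X 0 0 0 1 0 0)
          (by rw [cubeEdge_comp, cubeEdge_comp] <;> decide))
        -- the top edge `X (0,0,0) ⟶ X (0,0,1)`
        (cubeEdge X 0 0 0 0 0 1)
        -- the bottom edge `P₀ ⟶ P₁` induced by functoriality of `X`
        (pullback.map _ _ _ _
          (cubeEdge X 0 1 0 0 1 1) (cubeEdge X 1 0 0 1 0 1) (cubeEdge X 1 1 0 1 1 1)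
          (by rw [cubeEdge_comp, cubeEdge_comp] <;> decide)
          (by rw [cubeEdge_comp, cubeEdge_comp] <;> decide))
        -- the right edge `X (0,0,1) ⟶ P₁` induced by the structure maps of the cube
        (pullback.lift (cubeEdge X 0 0 1 0 1 1) (cubeEdge X 0 0 1 1 0 1)
          (by rw [cubeEdge_comp, cubeEdge_comp] <;> decide)) := by
  rw [isPullback_pullbackLift_iff_isTripleFiberProduct,
    nonempty_isLimit_cubeCone_iff_isTripleFiberProduct]
  all_goals rw [cubeEdge_comp, cubeEdge_comp]
end

section
/- Let C, D, E be categories, and suppose given functors L : C ⥤ D ⥤ E and R : Dᵒᵖ ⥤ E ⥤ C together with bijections Hom_E((L.obj c).obj d, e) ≃ Hom_C(c, (R.obj (op d)).obj e), natural in c ∈ C, d ∈ D and e ∈ E. Let γ : c' → c be a morphism of C, δ : d' → d a morphism of D and ε : e → e' a morphism of E, and assume that the pullback P = (R d)(e') ×_{(R d')(e')} (R d')(e) exists in C and that the pushout Q = (L c')(d) ⊔_{(L c')(d')} (L c)(d') exists in E. Then the canonical morphism (R d)(e) → P induced by δ and ε is right orthogonal to γ if and only if the canonical morphism Q → (L c)(d)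 induced by γ and δ is left orthogonal to ε. -/
open CategoryTheory CategoryTheory.Limits Opposite

universe v₁ v₂ v₃ u₁ u₂ u₃

/-- `u` is left orthogonal to `v` (equivalently, `v` is right orthogonal to `u`) if every
commutative square with left edge `u` and right edge `v` admits a unique diagonal filler. -/
def CategoryTheory.IsOrthogonal {T : Type*} [Category T] {a b x y : T}
    (u : a ⟶ b) (v : x ⟶ y) : Prop :=
  ∀ (top : a ⟶ x) (bot : b ⟶ y), u ≫ bot = top ≫ v →
    ∃! d : b ⟶ x, u ≫ d = top ∧ d ≫ v = bot

variable {C : Type u₁} {D : Type u₂} {E : Type u₃}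
  [Category.{v₁} C] [Category.{v₂} D] [Category.{v₃} E]

/-- Given a two-variable functor `L : C ⥤ D ⥤ E` with a "partial right adjoint"
`R : Dᵒᵖ ⥤ E ⥤ C`, i.e. bijections `Hom_E((L c) d, e) ≃ Hom_C(c, (R d) e)` natural in all
three variables, and morphisms `γ : c' ⟶ c`, `δ : d' ⟶ d`, `ε : e ⟶ e'`, the canonical map
`(R d)(e) ⟶ (R d)(e') ×_{(R d')(e')} (R d')(e)` is right orthogonal to `γ` if and only if the
canonical map `(L c')(d) ⊔_{(L c')(d')} (L c)(d') ⟶ (L c)(d)` is left orthogonal to `ε`. -/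
theorem isOrthogonal_pullback_iff_isOrthogonal_pushout
    (L : C ⥤ D ⥤ E) (R : Dᵒᵖ ⥤ E ⥤ C)
    (adj : ∀ (c : C) (d : D) (e : E), ((L.obj c).obj d ⟶ e) ≃ (c ⟶ (R.obj (op d)).obj e))
    (nat_left : ∀ {c c' : C} (γ : c' ⟶ c) (d : D) (e : E) (h : (L.obj c).obj d ⟶ e),
      adj c' d e ((L.map γ).app d ≫ h) = γ ≫ adj c d e h)
    (nat_mid : ∀ (c : C) {d d' : D} (δ : d' ⟶ d) (e : E) (h : (L.obj c).obj d ⟶ e),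
      adj c d' e ((L.obj c).map δ ≫ h) = adj c d e h ≫ (R.map δ.op).app e)
    (nat_right : ∀ (c : C) (d : D) {e e' : E} (ε : e ⟶ e') (h : (L.obj c).obj d ⟶ e),
      adj c d e' (h ≫ ε) = adj c d e h ≫ (R.obj (op d)).map ε)
    {c c' : C} {d d' : D} {e e' : E} (γ : c' ⟶ c) (δ : d' ⟶ d) (ε : e ⟶ e')
    [HasPullback ((R.map δ.op).app e') ((R.obj (op d')).map ε)]
    [HasPushout ((L.obj c').map δ) ((L.map γ).app d')] :
    IsOrthogonal γ
      (pullback.lift ((R.obj (op d)).map ε) ((R.map δ.op).app e)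
        ((R.map δ.op).naturality ε)) ↔
    IsOrthogonal
      (pushout.desc ((L.map γ).app d) ((L.obj c).map δ)
        ((L.map γ).naturality δ))
      ε := by
  set P := pullback ((R.map δ.op).app e') ((R.obj (op d')).map ε)
  set Q := pushout ((L.obj c').map δ) ((L.map γ).app d')
  set p : (R.obj (op d)).obj e ⟶ P := pullback.lift ((R.obj (op d)).map ε) ((R.map δ.op).app e)
    ((R.map δ.op).naturality ε) with hp
  set q : Q ⟶ (L.obj c).obj d := pushout.desc ((L.map γ).app d) ((L.obj c).map δ)
    ((L.map γ).naturality δ) with hq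
  set pf := pullback.fst ((R.map δ.op).app e') ((R.obj (op d')).map ε) with hpf
  set ps := pullback.snd ((R.map δ.op).app e') ((R.obj (op d')).map ε) with hps
  set qi := pushout.inl ((L.obj c').map δ) ((L.map γ).app d') with hqi
  set qr := pushout.inr ((L.obj c').map δ) ((L.map γ).app d') with hqr
  have ppf : p ≫ pf = (R.obj (op d)).map ε := pullback.lift_fst _ _ _
  have pps : p ≫ ps = (R.map δ.op).app e := pullback.lift_snd _ _ _
  have qqi : qi ≫ q = (L.map γ).app d := pushout.inl_desc _ _ _
  have qqr : qr ≫ q = (L.obj c).map δ := pushout.inr_desc _ _ _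
  have pcond : pf ≫ (R.map δ.op).app e' = ps ≫ (R.obj (op d')).map ε := pullback.condition
  have qcond : (L.obj c').map δ ≫ qi = (L.map γ).app d' ≫ qr := pushout.condition
  constructor
  · -- pullback side ⇒ pushout side
    intro H top bot sq
    have comm : adj c d e' bot ≫ (R.map δ.op).app e' =
        adj c d' e (qr ≫ top) ≫ (R.obj (op d')).map ε := by
      rw [← nat_mid, ← nat_right]
      congr 1
      calc (L.obj c).map δ ≫ bot = (qr ≫ q) ≫ bot := by rw [qqr]
        _ = qr ≫ top ≫ ε := by rw [Category.assoc, sq]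
        _ = (qr ≫ top) ≫ ε := by rw [Category.assoc]
    have sq' : γ ≫ pullback.lift (adj c d e' bot) (adj c d' e (qr ≫ top)) comm =
        adj c' d e (qi ≫ top) ≫ p := by
      apply pullback.hom_ext
      · rw [Category.assoc, Category.assoc, pullback.lift_fst, pullback.lift_fst,
          ← nat_left, ← nat_right]
        congr 1
        calc (L.map γ).app d ≫ bot = (qi ≫ q) ≫ bot := by rw [qqi]
          _ = qi ≫ top ≫ ε := by rw [Category.assoc, sq]
          _ = (qi ≫ top) ≫ ε := by rw [Category.assoc]
      · rw [Category.assoc, Category.assoc, pullback.lift_snd, pullback.lift_snd,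
          ← nat_left, ← nat_mid]
        congr 1
        calc (L.map γ).app d' ≫ qr ≫ top = ((L.map γ).app d' ≫ qr) ≫ top := by
              rw [Category.assoc]
          _ = ((L.obj c').map δ ≫ qi) ≫ top := by rw [← qcond]
          _ = (L.obj c').map δ ≫ qi ≫ top := by rw [Category.assoc]
    obtain ⟨l, ⟨hl1, hl2⟩, uniq⟩ := H (adj c' d e (qi ≫ top))
      (pullback.lift (adj c d e' bot) (adj c d' e (qr ≫ top)) comm) sq'
    have hl2f : l ≫ (R.obj (op d)).map ε = adj c d e' bot := by
      rw [← ppf, ← Category.assoc, hl2, pullback.lift_fst]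
    have hl2s : l ≫ (R.map δ.op).app e = adj c d' e (qr ≫ top) := by
      rw [← pps, ← Category.assoc, hl2, pullback.lift_snd]
    refine ⟨(adj c d e).symm l, ⟨?_, ?_⟩, ?_⟩
    · apply pushout.hom_ext
      · rw [← Category.assoc, qqi]
        apply (adj c' d e).injective
        rw [nat_left, Equiv.apply_symm_apply, hl1]
      · rw [← Category.assoc, qqr]
        apply (adj c d' e).injective
        rw [nat_mid, Equiv.apply_symm_apply, hl2s]
    · apply (adj c d e').injective
      rw [nat_right, Equiv.apply_symm_apply, hl2f]
    · intro m ⟨hm1, hm2⟩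
      apply (adj c d e).injective
      rw [Equiv.apply_symm_apply]
      apply uniq
      constructor
      · rw [← nat_left]
        congr 1
        rw [← qqi, Category.assoc, hm1]
      · apply pullback.hom_ext
        · rw [Category.assoc, pullback.lift_fst, pullback.lift_fst, ← nat_right, hm2]
        · rw [Category.assoc, pullback.lift_snd, pullback.lift_snd, ← nat_mid]
          congr 1
          rw [← qqr, Category.assoc, hm1]
  · -- pushout side ⇒ pullback side
    intro H top bot sq
    have sqf : γ ≫ bot ≫ pf = top ≫ (R.obj (op d)).map ε := by
      rw [← Category.assoc, sq, Category.assoc, ppf]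
    have sqs : γ ≫ bot ≫ ps = top ≫ (R.map δ.op).app e := by
      rw [← Category.assoc, sq, Category.assoc, pps]
    have comm : (L.obj c').map δ ≫ (adj c' d e).symm top =
        (L.map γ).app d' ≫ (adj c d' e).symm (bot ≫ ps) := by
      apply (adj c' d' e).injective
      rw [nat_mid, nat_left, Equiv.apply_symm_apply, Equiv.apply_symm_apply, ← sqs]
    have sq' : q ≫ (adj c d e').symm (bot ≫ pf) =
        pushout.desc ((adj c' d e).symm top) ((adj c d' e).symm (bot ≫ ps)) comm ≫ ε := by
      apply pushout.hom_ext
      · rw [← Category.assoc, ← Category.assoc, qqi, pushout.inl_desc]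
        apply (adj c' d e').injective
        rw [nat_left, nat_right, Equiv.apply_symm_apply, Equiv.apply_symm_apply, ← sqf]
      · rw [← Category.assoc, ← Category.assoc, qqr, pushout.inr_desc]
        apply (adj c d' e').injective
        rw [nat_mid, nat_right, Equiv.apply_symm_apply, Equiv.apply_symm_apply,
          Category.assoc, Category.assoc, pcond]
    obtain ⟨m, ⟨hm1, hm2⟩, uniq⟩ := H
      (pushout.desc ((adj c' d e).symm top) ((adj c d' e).symm (bot ≫ ps)) comm)
      ((adj c d e').symm (bot ≫ pf)) sq'
    have hm1i : (L.map γ).app d ≫ m = (adj c' d e).symm top := by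
      rw [← qqi, Category.assoc, hm1, pushout.inl_desc]
    have hm1r : (L.obj c).map δ ≫ m = (adj c d' e).symm (bot ≫ ps) := by
      rw [← qqr, Category.assoc, hm1, pushout.inr_desc]
    refine ⟨adj c d e m, ⟨?_, ?_⟩, ?_⟩
    · rw [← nat_left, hm1i, Equiv.apply_symm_apply]
    · apply pullback.hom_ext
      · rw [Category.assoc, pullback.lift_fst, ← nat_right, hm2, Equiv.apply_symm_apply]
      · rw [Category.assoc, pullback.lift_snd, ← nat_mid, hm1r, Equiv.apply_symm_apply]
    · intro l ⟨hl1, hl2⟩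
      have key : (adj c d e).symm l = m := by
        apply uniq
        constructor
        · apply pushout.hom_ext
          · rw [← Category.assoc, qqi, pushout.inl_desc]
            apply (adj c' d e).injective
            rw [nat_left, Equiv.apply_symm_apply, Equiv.apply_symm_apply, hl1]
          · rw [← Category.assoc, qqr, pushout.inr_desc]
            apply (adj c d' e).injective
            rw [nat_mid, Equiv.apply_symm_apply, Equiv.apply_symm_apply,
              ← pps, ← Category.assoc, hl2]
        · apply (adj c d e').injective
          rw [nat_right, Equiv.apply_symm_apply, Equiv.apply_symm_apply,
            ← ppf, ← Category.assoc, hl2]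
      calc l = adj c d e ((adj c d e).symm l) := (Equiv.apply_symm_apply _ _).symm
        _ = adj c d e m := by rw [key]
end

section
/- Let p : E ⥤ B be a functor of categories such that (i) for every object x of E and every morphism f : p(x) → b of B there exists a strongly cocartesian morphism of E over f with source x, and (ii) for every object y of E and every morphism f : b → p(y) of B there exists a weakly cartesian morphism of E over f with target y. Then every weakly cartesian morphism of E is strongly cartesian; in particular, p is a Grothendieck fibration. -/
open CategoryTheory Functor

universe v₁ v₂ u₁ u₂

variable {E : Type u₁} {B : Type u₂} [Category.{v₁} E] [Category.{v₂} B]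

/-- If `p : E ⥤ B` admits strongly cocartesian lifts of all morphisms out of the image of any
object, and weakly cartesian lifts of all morphisms into the image of any object, then every
weakly cartesian morphism of `E` is strongly cartesian; in particular `p` is a Grothendieck
fibration (every morphism of `B` admits strongly cartesian lifts with any prescribed target). -/
theorem isStronglyCartesian_of_isCartesian_of_lifts (p : E ⥤ B)
    (hcocart : ∀ (x : E) (b : B) (f : p.obj x ⟶ b),
      ∃ (y : E) (φ : x ⟶ y), p.IsStronglyCocartesian f φ)
    (hcart : ∀ (y : E) (b : B) (f : b ⟶ p.obj y),
      ∃ (x : E) (φ : x ⟶ y), p.IsCartesian f φ) :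
    (∀ {x y : E} {b b' : B} (f : b ⟶ b') (φ : x ⟶ y),
        p.IsCartesian f φ → p.IsStronglyCartesian f φ) ∧
      ∀ (y : E) (b : B) (f : b ⟶ p.obj y),
        ∃ (x : E) (φ : x ⟶ y), p.IsStronglyCartesian f φ := by
  have main : ∀ {x y : E} {b b' : B} (f : b ⟶ b') (φ : x ⟶ y),
      p.IsCartesian f φ → p.IsStronglyCartesian f φ := by
    intro x y b b' f φ hφ
    refine ⟨fun {z} g ψ hψ => ?_⟩
    -- Choose a strongly cocartesian lift `ω : z ⟶ w` of `g`.
    obtain ⟨w, ω, hω⟩ := hcocart z b g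
    -- Factor `ψ` as `ω ≫ τ` with `τ` over `f`.
    let τ : w ⟶ y := IsStronglyCocartesian.map p g ω (f' := g ≫ f) rfl ψ
    have hτfac : ω ≫ τ = ψ := IsStronglyCocartesian.fac p g ω (f' := g ≫ f) rfl ψ
    -- Factor `τ` through `φ` via `χ₁` over `𝟙 b`.
    let χ₁ : w ⟶ x := IsCartesian.map p f φ τ
    have hχ₁fac : χ₁ ≫ φ = τ := IsCartesian.fac p f φ τ
    refine ⟨ω ≫ χ₁, ⟨IsHomLift.comp_lift_id_right' p g ω b χ₁, by
      rw [Category.assoc, hχ₁fac, hτfac]⟩, ?_⟩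
    -- Uniqueness
    rintro χ' ⟨hχ'lift, hχ'fac⟩
    -- Factor `χ'` through `ω` via `α'` over `𝟙 b`.
    let α' : w ⟶ x := IsStronglyCocartesian.map p g ω (f' := g) (Category.comp_id g).symm χ'
    have hα'fac : ω ≫ α' = χ' := IsStronglyCocartesian.fac p g ω (f' := g)
      (Category.comp_id g).symm χ'
    haveI : p.IsHomLift f (α' ≫ φ) := IsHomLift.comp_lift_id_left' p b α' f φ
    -- `α' ≫ φ = τ` by uniqueness of the cocartesian factorization.
    have h1 : α' ≫ φ = τ := by
      apply IsStronglyCocartesian.map_uniq p g ω (f' := g ≫ f) rfl ψ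
      rw [← Category.assoc, hα'fac, hχ'fac]
    -- hence `α' = χ₁` by uniqueness of the cartesian factorization.
    have h2 : α' = χ₁ := IsCartesian.map_uniq p f φ τ α' h1
    rw [← hα'fac, h2]
  refine ⟨main, fun y b f => ?_⟩
  obtain ⟨x, φ, hφ⟩ := hcart y b f
  exact ⟨x, φ, main f φ hφ⟩
end

section
/- Let B be a category and F : B ⥤ Cat a functor. The projection functor from the Grothendieck construction, ∫F ⥤ B, is a Grothendieck fibration (i.e. every morphism f : b → b' of B admits, for every object of ∫F over b', a strongly cartesian lift with that target) if and only if for every morphism f : b → b' of B the functor F.map f : F(b) ⥤ F(b') admits a right adjoint (i.e. is a left adjoint). -/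
/-!
A morphism `φ = (f, ε) : (b, x) ⟶ (b', y)` of `∫F` is strongly cartesian exactly when
`ε : F(f)(x) ⟶ y` is terminal in the comma category `F(f) ↓ y`: a morphism `(c, z) ⟶ (b, x)`
of `∫F` over `g : c ⟶ b` is a morphism `u : F(g)(z) ⟶ x` of the fibre, and composing it with `φ`
amounts to `u ↦ F(f)(u) ≫ ε`. So cartesian lifts of `f` exist for every target iff every
`F(f) ↓ y` has a terminal object, i.e. iff `F(f)` has a right adjoint, whose counit provides the
lifts.
-/

open CategoryTheory Functor

universe v u v₁ u₁

variable {B : Type u₁} [Category.{v₁} B]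

namespace CategoryTheory

open Limits

lemma Functor.isHomLift_iff {𝒳 𝒮 : Type*} [Category 𝒳] [Category 𝒮] (p : 𝒳 ⥤ 𝒮) {a b : 𝒳}
    (f : p.obj a ⟶ p.obj b) (φ : a ⟶ b) : p.IsHomLift f φ ↔ p.map φ = f :=
  ⟨fun _ => (IsHomLift.eq_of_isHomLift p f φ).symm, by rintro rfl; infer_instance⟩

noncomputable def CostructuredArrow.IsUniversal.ofExistsUnique {C D : Type*} [Category C]
    [Category D] {S : C ⥤ D} {T : D} {f : CostructuredArrow S T}
    (h : ∀ g : CostructuredArrow S T, ∃! η : g.left ⟶ f.left, S.map η ≫ f.hom = g.hom) :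
    IsUniversal f :=
  IsTerminal.ofUniqueHom (fun g => homMk (h g).choose (h g).choose_spec.1)
    (fun g m => ext _ _ ((h g).choose_spec.2 m.left (w m)))

namespace Grothendieck

variable {F : B ⥤ Cat.{v, u}}

lemma isHomLift_forget_iff {A X : Grothendieck F} (g : A.base ⟶ X.base) (χ : A ⟶ X) :
    (forget F).IsHomLift g χ ↔ χ.base = g :=
  (forget F).isHomLift_iff g χ

lemma hom_eq_mk {A X : Grothendieck F} (χ : A ⟶ X) {g : A.base ⟶ X.base} (h : χ.base = g) :
    χ = Hom.mk g (eqToHom (by rw [h]) ≫ χ.fiber) :=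
  Grothendieck.ext _ _ h (by simp)

lemma mk_comp_eq_iff {A X Y : Grothendieck F} {g : A.base ⟶ X.base}
    (u : (F.map g).toFunctor.obj A.fiber ⟶ X.fiber) (φ : X ⟶ Y) (ψ : A ⟶ Y)
    (h : ψ.base = g ≫ φ.base) :
    (Hom.mk g u : A ⟶ X) ≫ φ = ψ ↔
      (F.map φ.base).toFunctor.map u ≫ φ.fiber = eqToHom (by simp [h]) ≫ ψ.fiber := by
  constructor
  · rintro rfl
    simp only [comp_fiber, eqToHom_trans_assoc, eqToHom_refl, Category.id_comp]
  · intro hu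
    rw [hom_eq_mk ψ h]
    refine Grothendieck.ext _ _ rfl ?_
    simp only [comp_fiber, hu, eqToHom_trans_assoc]

/- The morphisms `Hom.mk (𝟙 X.base) (eqToHom _ ≫ u)` below are `(ι F X.base).map u`, spelled out
so that their source is syntactically `⟨X.base, w⟩`. -/

lemma mk_id_comp_eq_mk_iff {X Y : Grothendieck F} {w : F.obj X.base} (u : w ⟶ X.fiber)
    (φ : X ⟶ Y) (v : (F.map φ.base).toFunctor.obj w ⟶ Y.fiber) :
    (Hom.mk (𝟙 X.base) (eqToHom (by simp) ≫ u) : (⟨X.base, w⟩ : Grothendieck F) ⟶ X) ≫ φ =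
      (Hom.mk φ.base v : (⟨X.base, w⟩ : Grothendieck F) ⟶ Y) ↔
      (F.map φ.base).toFunctor.map u ≫ φ.fiber = v := by
  refine (mk_comp_eq_iff (A := ⟨X.base, w⟩) _ φ _ (Category.id_comp _).symm).trans ?_
  simp only [Functor.map_comp, eqToHom_map, Category.assoc]
  exact cancel_epi _

lemma exists_mk_id_eq {X : Grothendieck F} {w : F.obj X.base}
    (χ : (⟨X.base, w⟩ : Grothendieck F) ⟶ X) (h : χ.base = 𝟙 X.base) :
    ∃ u : w ⟶ X.fiber,
      (Hom.mk (𝟙 X.base) (eqToHom (by simp) ≫ u) : (⟨X.base, w⟩ : Grothendieck F) ⟶ X) = χ :=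
  ⟨eqToHom (by simp [h]) ≫ χ.fiber, Grothendieck.ext _ _ h.symm (by simp)⟩

lemma mk_id_injective {X : Grothendieck F} {w : F.obj X.base} :
    Function.Injective (fun u : w ⟶ X.fiber =>
      (Hom.mk (𝟙 X.base) (eqToHom (by simp) ≫ u) : (⟨X.base, w⟩ : Grothendieck F) ⟶ X)) :=
  fun _ _ h => (cancel_epi _).1 (by simpa using h)

noncomputable def isUniversalOfIsCartesian {X Y : Grothendieck F} (φ : X ⟶ Y)
    [(forget F).IsCartesian φ.base φ] :
    CostructuredArrow.IsUniversal
      (CostructuredArrow.mk φ.fiber : CostructuredArrow (F.map φ.base).toFunctor Y.fiber) := by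
  refine .ofExistsUnique fun Z => ?_
  let ψ : (⟨X.base, Z.left⟩ : Grothendieck F) ⟶ Y := Hom.mk φ.base Z.hom
  have : (forget F).IsHomLift φ.base ψ := (isHomLift_forget_iff _ _).2 rfl
  obtain ⟨χ, ⟨hχ, hfac⟩, huniq⟩ := IsCartesian.universal_property (p := forget F) (f := φ.base)
    (φ := φ) ψ
  obtain ⟨u, rfl⟩ := exists_mk_id_eq χ ((isHomLift_forget_iff _ _).1 hχ)
  refine ⟨u, (mk_id_comp_eq_mk_iff _ _ _).1 hfac, fun u' hu' => mk_id_injective ?_⟩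
  exact huniq _ ⟨(isHomLift_forget_iff _ _).2 rfl, (mk_id_comp_eq_mk_iff _ _ _).2 hu'⟩

lemma existsUnique_comp_eq_of_isUniversal {X Y : Grothendieck F} {φ : X ⟶ Y}
    (H : CostructuredArrow.IsUniversal
      (CostructuredArrow.mk φ.fiber : CostructuredArrow (F.map φ.base).toFunctor Y.fiber))
    {A : Grothendieck F} (g : A.base ⟶ X.base) (ψ : A ⟶ Y) (h : ψ.base = g ≫ φ.base) :
    ∃! χ : A ⟶ X, (forget F).IsHomLift g χ ∧ χ ≫ φ = ψ := by
  obtain ⟨u, hu, huniq⟩ := H.existsUnique (CostructuredArrow.mk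
    (eqToHom (by simp [h]) ≫ ψ.fiber :
      (F.map φ.base).toFunctor.obj ((F.map g).toFunctor.obj A.fiber) ⟶ Y.fiber))
  refine ⟨Hom.mk g u, ⟨(isHomLift_forget_iff _ _).2 rfl, (mk_comp_eq_iff _ _ _ h).2 hu⟩, ?_⟩
  rintro χ ⟨hχ, hfac⟩
  rw [hom_eq_mk χ ((isHomLift_forget_iff _ _).1 hχ)] at hfac ⊢
  rw [huniq _ ((mk_comp_eq_iff _ _ _ h).1 hfac)]

lemma isStronglyCartesian_of_isUniversal {X Y : Grothendieck F} {φ : X ⟶ Y}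
    (H : CostructuredArrow.IsUniversal
      (CostructuredArrow.mk φ.fiber : CostructuredArrow (F.map φ.base).toFunctor Y.fiber)) :
    (forget F).IsStronglyCartesian φ.base φ :=
  have : (forget F).IsHomLift φ.base φ := (isHomLift_forget_iff _ _).2 rfl
  ⟨fun g ψ hψ => existsUnique_comp_eq_of_isUniversal H g ψ ((isHomLift_forget_iff _ _).1 hψ)⟩

end Grothendieck

end CategoryTheory

/-- The projection from the Grothendieck construction of `F : B ⥤ Cat` is a Grothendieck
fibration (every morphism of `B` admits strongly cartesian lifts with any prescribed target)
if and only if `F.map f` is a left adjoint (i.e. admits a right adjoint) for every morphism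
`f` of `B`. -/
theorem grothendieck_forget_isFibration_iff_leftAdjoints (F : B ⥤ Cat.{v, u}) :
    (∀ (y : Grothendieck F) (b : B) (f : b ⟶ (Grothendieck.forget F).obj y),
        ∃ (x : Grothendieck F) (φ : x ⟶ y), (Grothendieck.forget F).IsStronglyCartesian f φ) ↔
      ∀ {b b' : B} (f : b ⟶ b'), (F.map f).toFunctor.IsLeftAdjoint := by
  constructor
  · intro h b b' f
    rw [isLeftAdjoint_iff_hasTerminal_costructuredArrow]
    intro y
    obtain ⟨x, φ, hφ⟩ := h ⟨b', y⟩ b f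
    obtain rfl : x.base = b := @IsHomLift.domain_eq _ _ _ _ _ _ _ _ _ f φ hφ.toIsHomLift
    obtain rfl := (Grothendieck.isHomLift_forget_iff f φ).1 hφ.toIsHomLift
    have : (Grothendieck.forget F).IsCartesian φ.base φ :=
      @IsStronglyCartesian.isCartesian_of_isStronglyCartesian _ _ _ _ _ _ _ _ _ _ _ hφ
    exact (Grothendieck.isUniversalOfIsCartesian φ).hasTerminal
  · intro h y b f
    have := h f
    let adj := Adjunction.ofIsLeftAdjoint (F.map f).toFunctor
    exact ⟨⟨b, _⟩, ⟨f, adj.counit.app y.fiber⟩, Grothendieck.isStronglyCartesian_of_isUniversal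
      (φ := (⟨f, adj.counit.app y.fiber⟩ : (⟨b, _⟩ : Grothendieck F) ⟶ y))
      (mkTerminalOfRightAdjoint _ adj y.fiber)⟩
end

section
/- Let p : E ⥤ B and q : D ⥤ B be Grothendieck fibrations and let G : E ⥤ D be a functor with G ⋙ q = p. Then the following are equivalent: (1) there exist a functor L : D ⥤ E and an adjunction L ⊣ G such that q sends every component of the unit of this adjunction to an isomorphism of B; (2) G sends strongly cartesian morphisms of E to strongly cartesian morphisms of D, and for every object b of B the functor induced by G on fiber categories E_b ⥤ D_b admits a left adjoint. -/
open CategoryTheory Functor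

universe v₁ v₂ v₃ u₁ u₂ u₃

variable {B : Type u₁} {E : Type u₂} {D : Type u₃}
  [Category.{v₁} B] [Category.{v₂} E] [Category.{v₃} D]

/-- A functor `G : E ⥤ D` with `G ⋙ q = p` restricts to a functor on fiber categories
`E_b ⥤ D_b` for every `b : B`. -/
def fiberFunctorOfEq {p : E ⥤ B} {q : D ⥤ B} (G : E ⥤ D) (hG : G ⋙ q = p) (b : B) :
    p.Fiber b ⥤ q.Fiber b :=
  Fiber.inducedFunctor (F := Fiber.fiberInclusion ⋙ G)
    (by rw [Functor.assoc, hG]; exact Fiber.fiberInclusion_comp_eq_const)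

/-!
Both sides are equivalent to `G` having *vertical universal arrows*: every `d : D` has a
universal arrow `u : d ⟶ G e` lying over `𝟙 (q d)`.

If `L ⊣ G` has units over isomorphisms, compose the unit `η_d` with the inverse of a cartesian
lift of `q η_d` (an isomorphism, as it lies over one) to make it vertical. Conversely, universal
arrows are unique up to isomorphism, so the unit of any adjunction is a vertical universal arrow
followed by an isomorphism, which `q` sends to an isomorphism.

A vertical universal arrow is universal among vertical arrows too, which gives the fiberwise
left adjoints. Transposing along it does not change base morphisms, so strongly cartesian
morphisms of `E` go to strongly cartesian morphisms of `D`. Conversely, the unit of a fiberwise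
adjunction is universal for `G`: any `ψ : d ⟶ G y` factors through the image of a cartesian
lift of `q ψ` by a vertical arrow, and that arrow factors through the fiberwise unit.
-/

namespace CategoryTheory

open Limits IsHomLift

section HomLift

variable {R S : B} {a b c : E}

lemma Functor.isHomLift_comp_iff (G : E ⥤ D) (q : D ⥤ B) (f : R ⟶ S) (φ : a ⟶ b) :
    (G ⋙ q).IsHomLift f φ ↔ q.IsHomLift f (G.map φ) :=
  ⟨fun _ ↦ of_fac' q f (G.map φ) (domain_eq (G ⋙ q) f φ) (codomain_eq (G ⋙ q) f φ)
      (fac' (G ⋙ q) f φ),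
    fun _ ↦ of_fac' (G ⋙ q) f φ (domain_eq q f (G.map φ)) (codomain_eq q f (G.map φ))
      (fac' q f (G.map φ))⟩

lemma IsHomLift.of_comp_of_isHomLift_id (p : E ⥤ B) (f : R ⟶ S) (φ : a ⟶ b)
    (ψ : b ⟶ c) [p.IsHomLift (𝟙 R) φ] [p.IsHomLift f (φ ≫ ψ)] : p.IsHomLift f ψ := by
  apply of_fac' p f ψ (codomain_eq p (𝟙 R) φ) (codomain_eq p f (φ ≫ ψ))
  have hφψ := fac' p f (φ ≫ ψ)
  rw [p.map_comp, fac' p (𝟙 R) φ, Category.id_comp, Category.assoc, eqToHom_comp_iff,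
    eqToHom_comp_iff] at hφψ
  simpa using hφψ

lemma IsHomLift.isIso_map_of_isHomLift_id (p : E ⥤ B) (φ : a ⟶ b)
    [p.IsHomLift (𝟙 R) φ] : IsIso (p.map φ) := by
  rw [fac' p (𝟙 R) φ]
  infer_instance

end HomLift

section UniversalArrow

variable {E' D' : Type*} [Category E'] [Category D']

/-- `StructuredArrow.IsUniversal (.mk u)`, as a proposition. -/
def Functor.IsUniversalArrow (G : E' ⥤ D') {d : D'} {e : E'} (u : d ⟶ G.obj e) : Prop :=
  ∀ ⦃y : E'⦄ (ψ : d ⟶ G.obj y), ∃! χ : e ⟶ y, u ≫ G.map χ = ψ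

variable {G : E' ⥤ D'} {d : D'} {e e' : E'} {u : d ⟶ G.obj e}

lemma Adjunction.isUniversalArrow_unit {L : D' ⥤ E'} (adj : L ⊣ G) (d : D') :
    G.IsUniversalArrow (adj.unit.app d) := fun y ψ ↦
  ⟨L.map ψ ≫ adj.counit.app y, (adj.unit_comp_map_eq_iff _ _).2 rfl,
    fun _ hχ ↦ (adj.unit_comp_map_eq_iff _ _).1 hχ⟩

lemma Functor.IsUniversalArrow.comp_map_iso (hu : G.IsUniversalArrow u) (i : e ≅ e') :
    G.IsUniversalArrow (u ≫ G.map i.hom) := by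
  intro y ψ
  obtain ⟨τ, hτ, hτ_uniq⟩ := hu ψ
  refine ⟨i.inv ≫ τ, ?_, fun χ hχ ↦ (Iso.eq_inv_comp i).2 (hτ_uniq _ ?_)⟩
  · beta_reduce
    rw [Category.assoc, ← G.map_comp, i.hom_inv_id_assoc, hτ]
  · beta_reduce at hχ ⊢
    rwa [G.map_comp, ← Category.assoc]

lemma Functor.IsUniversalArrow.exists_isIso {u' : d ⟶ G.obj e'} (hu : G.IsUniversalArrow u)
    (hu' : G.IsUniversalArrow u') : ∃ i : e ⟶ e', IsIso i ∧ u ≫ G.map i = u' := by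
  obtain ⟨i, hi, -⟩ := hu u'
  obtain ⟨j, hj, -⟩ := hu' u
  refine ⟨i, ⟨j, ?_, ?_⟩, hi⟩
  · exact (hu u).unique (by rw [G.map_comp, ← Category.assoc, hi, hj]) (by simp)
  · exact (hu' u').unique (by rw [G.map_comp, ← Category.assoc, hj, hi]) (by simp)

lemma Functor.isRightAdjoint_of_isUniversalArrow
    (h : ∀ d : D', ∃ (e : E') (u : d ⟶ G.obj e), G.IsUniversalArrow u) : G.IsRightAdjoint := by
  refine isRightAdjoint_iff_hasInitial_structuredArrow.2 fun d ↦ ?_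
  obtain ⟨e, u, hu⟩ := h d
  choose desc fac uniq using fun Y : StructuredArrow d G ↦ hu Y.hom
  exact IsInitial.hasInitial (X := StructuredArrow.mk u)
    (IsInitial.ofUniqueHom (fun Y ↦ StructuredArrow.homMk (desc Y) (fac Y))
      fun Y m ↦ StructuredArrow.ext _ _ (uniq Y m.right (StructuredArrow.w m)))

end UniversalArrow

section Fibration

variable {q : D ⥤ B} {G : E ⥤ D}

lemma Functor.IsUniversalArrow.fiberFunctor {b : B} {d : q.Fiber b} {e : (G ⋙ q).Fiber b}
    {u : d ⟶ (fiberFunctorOfEq (q := q) G rfl b).obj e} (hu : G.IsUniversalArrow u.1) :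
    (fiberFunctorOfEq (q := q) G rfl b).IsUniversalArrow u := by
  intro y ψ
  obtain ⟨χ, hχ, hχ_uniq⟩ := hu ψ.1
  have := u.2
  have : q.IsHomLift (𝟙 b) (u.1 ≫ G.map χ) := (hχ : u.1 ≫ G.map χ = ψ.1) ▸ ψ.2
  have hχ_lift := (isHomLift_comp_iff G q _ χ).2 (of_comp_of_isHomLift_id q (𝟙 b) u.1 (G.map χ))
  exact ⟨⟨χ, hχ_lift⟩, Subtype.ext hχ,
    fun χ' hχ' ↦ Subtype.ext (hχ_uniq _ (congrArg Subtype.val hχ'))⟩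

lemma Functor.IsUniversalArrow.of_fiberFunctor [(G ⋙ q).IsFibered]
    (hpres : ∀ {x y : E} {a b : B} (f : a ⟶ b) (φ : x ⟶ y),
      (G ⋙ q).IsStronglyCartesian f φ → q.IsStronglyCartesian f (G.map φ))
    {b : B} {d : q.Fiber b} {e : (G ⋙ q).Fiber b}
    {u : d ⟶ (fiberFunctorOfEq (q := q) G rfl b).obj e}
    (hu : (fiberFunctorOfEq (q := q) G rfl b).IsUniversalArrow u) : G.IsUniversalArrow u.1 := by
  obtain ⟨d, rfl⟩ := d
  obtain ⟨e, he⟩ := e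
  obtain ⟨u, hu_lift⟩ := u
  -- instance search and `rw` do not see through `Fiber` and `fiberFunctorOfEq`
  change d ⟶ G.obj e at u
  change q.IsHomLift (𝟙 (q.obj d)) u at hu_lift
  intro y (ψ : d ⟶ G.obj y)
  obtain ⟨x, φ, _⟩ := IsPreFibered.exists_isCartesian (G ⋙ q) rfl (q.map ψ)
  have := hpres (q.map ψ) φ inferInstance
  obtain ⟨χ, ⟨hχ_lift, hχ⟩, hχ_uniq⟩ := IsStronglyCartesian.universal_property q (q.map ψ)
    (G.map φ) (𝟙 _) (q.map ψ) (Category.id_comp _).symm ψ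
  obtain ⟨⟨τ, hτ_lift⟩, hτ, hτ_uniq⟩ :=
    hu (y := ⟨x, domain_eq (G ⋙ q) (q.map ψ) φ⟩) ⟨χ, hχ_lift⟩
  change e ⟶ x at τ
  have hτ : u ≫ G.map τ = χ := congrArg Subtype.val hτ
  refine ⟨τ ≫ φ, ?_, fun (ξ : e ⟶ y) (hξ : u ≫ G.map ξ = ψ) ↦ ?_⟩
  · change u ≫ G.map (τ ≫ φ) = ψ
    rw [G.map_comp, ← Category.assoc, hτ, hχ]
  have : q.IsHomLift (q.map ψ) (u ≫ G.map ξ) := by rw [hξ]; infer_instance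
  have := (isHomLift_comp_iff G q _ ξ).2 (of_comp_of_isHomLift_id q (q.map ψ) u (G.map ξ))
  obtain ⟨τ', ⟨hτ'_lift, rfl⟩, -⟩ := IsStronglyCartesian.universal_property (G ⋙ q) (q.map ψ)
    φ (𝟙 _) (q.map ψ) (Category.id_comp _).symm ξ
  have := (isHomLift_comp_iff G q _ τ').1 hτ'_lift
  have hτ' : u ≫ G.map τ' = χ :=
    hχ_uniq _ ⟨inferInstance, by rw [Category.assoc, ← G.map_comp, hξ]⟩
  exact congrArg (·.1 ≫ φ) (hτ_uniq ⟨τ', hτ'_lift⟩ (Subtype.ext hτ'))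

def HasVerticalUniversalArrows (q : D ⥤ B) (G : E ⥤ D) : Prop :=
  ∀ d : D, ∃ (e : E) (u : d ⟶ G.obj e), G.IsUniversalArrow u ∧ q.IsHomLift (𝟙 (q.obj d)) u

lemma hasVerticalUniversalArrows_of_adjunction [(G ⋙ q).IsFibered] {L : D ⥤ E} (adj : L ⊣ G)
    (hη : ∀ d : D, IsIso (q.map (adj.unit.app d))) : HasVerticalUniversalArrows q G := by
  intro d
  let η := adj.unit.app d
  obtain ⟨x, φ, _⟩ := IsPreFibered.exists_isCartesian (G ⋙ q) rfl (q.map η)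
  have := IsStronglyCartesian.isIso_of_base_isIso (G ⋙ q) (q.map η) φ
  refine ⟨x, η ≫ G.map (inv φ), (adj.isUniversalArrow_unit d).comp_map_iso (asIso φ).symm, ?_⟩
  have := (isHomLift_comp_iff G q _ _).1 (IsHomLift.inv (G ⋙ q) (q.map η) φ)
  simpa using IsHomLift.comp q (q.map η) (inv (q.map η)) η (G.map (inv φ))

lemma HasVerticalUniversalArrows.exists_adjunction (h : HasVerticalUniversalArrows q G) :
    ∃ (L : D ⥤ E) (adj : L ⊣ G), ∀ d : D, IsIso (q.map (adj.unit.app d)) := by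
  have : G.IsRightAdjoint := G.isRightAdjoint_of_isUniversalArrow fun d ↦
    let ⟨e, u, hu, _⟩ := h d; ⟨e, u, hu⟩
  let adj := Adjunction.ofIsRightAdjoint G
  refine ⟨_, adj, fun d ↦ ?_⟩
  obtain ⟨e, u, hu, _⟩ := h d
  obtain ⟨i, _, hi⟩ := hu.exists_isIso (adj.isUniversalArrow_unit d)
  have := isIso_map_of_isHomLift_id q (R := q.obj d) u
  rw [← hi, q.map_comp]
  infer_instance

lemma HasVerticalUniversalArrows.isStronglyCartesian_map (h : HasVerticalUniversalArrows q G)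
    {x y : E} {a b : B} (f : a ⟶ b) (φ : x ⟶ y) [(G ⋙ q).IsStronglyCartesian f φ] :
    q.IsStronglyCartesian f (G.map φ) where
  toIsHomLift := (isHomLift_comp_iff G q f φ).1 inferInstance
  universal_property' {z} g ψ _ := by
    obtain ⟨e, u, hu, _⟩ := h z
    obtain ⟨ψ', rfl, hψ'_uniq⟩ := hu ψ
    have := (isHomLift_comp_iff G q _ ψ').2 (of_comp_of_isHomLift_id q (g ≫ f) u _)
    let χ := IsStronglyCartesian.map (G ⋙ q) f φ (g := g) rfl ψ'
    have := (isHomLift_comp_iff G q g χ).1 inferInstance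
    refine ⟨u ≫ G.map χ, ⟨inferInstance, ?_⟩, ?_⟩
    · rw [Category.assoc, ← G.map_comp, IsStronglyCartesian.fac]
    rintro χ₂ ⟨_, hfac⟩
    obtain ⟨χ', rfl, -⟩ := hu χ₂
    have := (isHomLift_comp_iff G q g χ').2 (of_comp_of_isHomLift_id q g u _)
    have hχ' : χ' ≫ φ = ψ' :=
      hψ'_uniq _ (by beta_reduce; rw [G.map_comp, ← Category.assoc, hfac])
    rw [IsStronglyCartesian.map_uniq (G ⋙ q) f φ (g := g) rfl ψ' χ' hχ']

lemma HasVerticalUniversalArrows.isRightAdjoint_fiberFunctor (h : HasVerticalUniversalArrows q G)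
    (b : B) : (fiberFunctorOfEq (q := q) G rfl b).IsRightAdjoint := by
  refine isRightAdjoint_of_isUniversalArrow fun ⟨d, hd⟩ ↦ ?_
  subst hd
  obtain ⟨e, u, hu, hu_lift⟩ := h d
  exact ⟨⟨e, codomain_eq q (𝟙 (q.obj d)) u⟩, ⟨u, hu_lift⟩, hu.fiberFunctor⟩

lemma hasVerticalUniversalArrows_of_isRightAdjoint_fiberFunctor [(G ⋙ q).IsFibered]
    (hpres : ∀ {x y : E} {a b : B} (f : a ⟶ b) (φ : x ⟶ y),
      (G ⋙ q).IsStronglyCartesian f φ → q.IsStronglyCartesian f (G.map φ))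
    (hfib : ∀ b : B, (fiberFunctorOfEq (q := q) G rfl b).IsRightAdjoint) :
    HasVerticalUniversalArrows q G := fun d ↦
  let adj := Adjunction.ofIsRightAdjoint (fiberFunctorOfEq (q := q) G rfl (q.obj d))
  let u := adj.unit.app (Fiber.mk rfl)
  ⟨_, u.1, (adj.isUniversalArrow_unit _).of_fiberFunctor hpres, u.2⟩

end Fibration

end CategoryTheory

theorem relative_left_adjoint_iff_fiberwise_and_cartesian_general
    (p : E ⥤ B) (q : D ⥤ B) (G : E ⥤ D) (hG : G ⋙ q = p)
    (hp : ∀ (y : E) (b : B) (f : b ⟶ p.obj y),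
      ∃ (x : E) (φ : x ⟶ y), p.IsStronglyCartesian f φ) :
    (∃ (L : D ⥤ E) (adj : L ⊣ G), ∀ d : D, IsIso (q.map (adj.unit.app d))) ↔
      ((∀ {x y : E} {a b : B} (f : a ⟶ b) (φ : x ⟶ y),
          p.IsStronglyCartesian f φ → q.IsStronglyCartesian f (G.map φ)) ∧
        ∀ b : B, (fiberFunctorOfEq G hG b).IsRightAdjoint) := by
  subst hG
  have : (G ⋙ q).IsFibered := .of_exists_isStronglyCartesian hp
  constructor
  · rintro ⟨L, adj, hη⟩
    have h := hasVerticalUniversalArrows_of_adjunction adj hη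
    exact ⟨fun f φ _ ↦ h.isStronglyCartesian_map f φ, h.isRightAdjoint_fiberFunctor⟩
  · rintro ⟨hpres, hfib⟩
    exact (hasVerticalUniversalArrows_of_isRightAdjoint_fiberFunctor hpres hfib).exists_adjunction

/-- Let `p : E ⥤ B` and `q : D ⥤ B` be Grothendieck fibrations, and let `G : E ⥤ D` be a
functor with `G ⋙ q = p`.  Then `G` admits a left adjoint `L` whose unit components are sent
by `q` to isomorphisms if and only if `G` sends strongly cartesian morphisms to strongly
cartesian morphisms and, for every `b : B`, the induced functor on fibers `E_b ⥤ D_b` admits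
a left adjoint. -/
theorem relative_left_adjoint_iff_fiberwise_and_cartesian
    (p : E ⥤ B) (q : D ⥤ B) (G : E ⥤ D) (hG : G ⋙ q = p)
    (hp : ∀ (y : E) (b : B) (f : b ⟶ p.obj y),
      ∃ (x : E) (φ : x ⟶ y), p.IsStronglyCartesian f φ)
    (hq : ∀ (y : D) (b : B) (f : b ⟶ q.obj y),
      ∃ (x : D) (φ : x ⟶ y), q.IsStronglyCartesian f φ) :
    (∃ (L : D ⥤ E) (adj : L ⊣ G), ∀ d : D, IsIso (q.map (adj.unit.app d))) ↔
      ((∀ {x y : E} {a b : B} (f : a ⟶ b) (φ : x ⟶ y),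
          p.IsStronglyCartesian f φ → q.IsStronglyCartesian f (G.map φ)) ∧
        ∀ b : B, (fiberFunctorOfEq G hG b).IsRightAdjoint) :=
  relative_left_adjoint_iff_fiberwise_and_cartesian_general p q G hG hp
end

section
/- Let p : E ⥤ B and q : D ⥤ B be Grothendieck opfibrations and let G : E ⥤ D be a functor with G ⋙ q = p. Then the following are equivalent: (1) there exist a functor R : D ⥤ E and an adjunction G ⊣ R such that q sends every component of the counit of this adjunction to an isomorphism of B; (2) G sends strongly cocartesian morphisms of E to strongly cocartesian morphisms of D, and for every object b of B the functor induced by G on fiber categories E_b ⥤ D_b admits a right adjoint. -/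
/-!
Call `e : G c ⟶ d` couniversal if `χ ↦ G χ ≫ e` is a bijection `(x ⟶ c) ≃ (G x ⟶ d)` for all `x`;
a right adjoint is the same as a choice of couniversal arrows into every `d`.

(⇒) Transposing along `G ⊣ R` turns lifts of `g` with target `z` into lifts of
`g ≫ (q ε_z)⁻¹` with target `R z`, so `G` carries the universal property of a cocartesian `φ` to
`G φ`. Since `q ε_d` is invertible, its cocartesian lift `ρ : R d ⟶ w` is an isomorphism onto an
object `w` of the fiber over `q d`, and `G ρ⁻¹ ≫ ε_d` is couniversal, hence also couniversal in
the fiber.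

(⇐) Let `ε_d` be the counit of the fiberwise adjunction over `q d`. A morphism `x ⟶ R d` factors
through a cocartesian lift of its image followed by a vertical morphism, and `G` preserves that
factorization, so couniversality of `ε_d` among vertical morphisms gives couniversality among all
morphisms; as `ε_d` is vertical, `q ε_d` is invertible.
-/

open CategoryTheory Functor

universe v₁ v₂ v₃ u₁ u₂ u₃

variable {B : Type u₁} {E : Type u₂} {D : Type u₃}
  [Category.{v₁} B] [Category.{v₂} E] [Category.{v₃} D]

namespace CategoryTheory

/-- `e` is a terminal object of `CostructuredArrow F d`, phrased as a bijection of hom-sets. -/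
def Functor.IsCouniversal {C C' : Type*} [Category C] [Category C'] (F : C ⥤ C') {c : C} {d : C'}
    (e : F.obj c ⟶ d) : Prop :=
  ∀ x : C, Function.Bijective fun χ : x ⟶ c => F.map χ ≫ e

section Couniversal

variable {C C' : Type*} [Category C] [Category C'] {F : C ⥤ C'}

lemma Functor.IsCouniversal.map_comp {c c' : C} {d : C'} {e : F.obj c ⟶ d}
    (he : F.IsCouniversal e) (i : c' ⟶ c) [IsIso i] : F.IsCouniversal (F.map i ≫ e) := by
  intro x
  convert (he x).comp ((Iso.refl x).homCongr (asIso i)).bijective using 1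
  ext χ
  simp

lemma Adjunction.isCouniversal_counit {R : C' ⥤ C} (adj : F ⊣ R) (d : C') :
    F.IsCouniversal (adj.counit.app d) := by
  intro x
  have transpose : ⇑(adj.homEquiv x d).symm = fun χ => F.map χ ≫ adj.counit.app d :=
    funext (adj.homEquiv_counit x d)
  exact transpose ▸ (adj.homEquiv x d).symm.bijective

lemma Functor.exists_adjunction_of_isCouniversal (P : MorphismProperty C')
    (h : ∀ d : C', ∃ (c : C) (e : F.obj c ⟶ d), F.IsCouniversal e ∧ P e) :
    ∃ (R : C' ⥤ C) (adj : F ⊣ R), ∀ d, P (adj.counit.app d) := by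
  choose R ε hε hP using h
  let homEquiv (x : C) (d : C') : (F.obj x ⟶ d) ≃ (x ⟶ R d) :=
    (Equiv.ofBijective _ (hε d x)).symm
  have map_homEquiv_comp (x : C) (d : C') (ψ : F.obj x ⟶ d) :
      F.map (homEquiv x d ψ) ≫ ε d = ψ :=
    (Equiv.ofBijective _ (hε d x)).apply_symm_apply ψ
  have homEquiv_naturality (x' x : C) (d : C') (f : x' ⟶ x) (ψ : F.obj x ⟶ d) :
      homEquiv x' d (F.map f ≫ ψ) = f ≫ homEquiv x d ψ := by
    apply (hε d x').injective
    simp only [map_homEquiv_comp, F.map_comp, Category.assoc]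
  refine ⟨_, Adjunction.adjunctionOfEquivRight homEquiv homEquiv_naturality, fun d => ?_⟩
  have counit_app :
      (Adjunction.adjunctionOfEquivRight homEquiv homEquiv_naturality).counit.app d = ε d := by
    simp [homEquiv]
  exact counit_app ▸ hP d

lemma Functor.isLeftAdjoint_of_isCouniversal
    (h : ∀ d : C', ∃ (c : C) (e : F.obj c ⟶ d), F.IsCouniversal e) : F.IsLeftAdjoint := by
  obtain ⟨_, adj, -⟩ := exists_adjunction_of_isCouniversal ⊤ fun d =>
    (h d).imp fun _ ⟨e, he⟩ => ⟨e, he, trivial⟩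
  exact adj.isLeftAdjoint

end Couniversal

namespace IsHomLift

lemma comp_functor_iff (G : E ⥤ D) (q : D ⥤ B) {a b : B} {x y : E} (f : a ⟶ b) (φ : x ⟶ y) :
    (G ⋙ q).IsHomLift f φ ↔ q.IsHomLift f (G.map φ) :=
  ⟨fun _ => of_fac q f _ (domain_eq (G ⋙ q) f φ) (codomain_eq (G ⋙ q) f φ) (fac (G ⋙ q) f φ),
    fun _ => of_fac (G ⋙ q) f _ (domain_eq q f (G.map φ)) (codomain_eq q f (G.map φ))
      (fac q f (G.map φ))⟩

instance map_of_comp_functor (G : E ⥤ D) (q : D ⥤ B) {a b : B} {x y : E} (f : a ⟶ b)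
    (φ : x ⟶ y) [(G ⋙ q).IsHomLift f φ] : q.IsHomLift f (G.map φ) :=
  (comp_functor_iff G q f φ).1 inferInstance

lemma comp_inv_map_iff (q : D ⥤ B) {a : B} {x y z : D} (h : a ⟶ q.obj z) (ψ : x ⟶ y)
    (ε : y ⟶ z) [IsIso (q.map ε)] :
    q.IsHomLift (h ≫ inv (q.map ε)) ψ ↔ q.IsHomLift h (ψ ≫ ε) := by
  constructor
  · intro
    simpa using (inferInstance : q.IsHomLift ((h ≫ inv (q.map ε)) ≫ q.map ε) (ψ ≫ ε))
  · intro
    obtain rfl := domain_eq q h (ψ ≫ ε)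
    rw [eq_of_isHomLift q h (ψ ≫ ε)]
    simp only [Functor.map_comp, Category.assoc, IsIso.hom_inv_id, Category.comp_id]
    infer_instance

lemma isIso_map (p : E ⥤ B) {R S : B} {x y : E} (f : R ⟶ S) (φ : x ⟶ y) [IsIso f]
    [p.IsHomLift f φ] : IsIso (p.map φ) := by
  rw [fac' p f φ]
  infer_instance

lemma of_comp_lift_id_right (p : E ⥤ B) {R S : B} {x y z : E} (f : R ⟶ S) (φ : x ⟶ y)
    (ψ : y ⟶ z) (hψ : p.IsHomLift (𝟙 S) ψ) (hφψ : p.IsHomLift f (φ ≫ ψ)) : p.IsHomLift f φ := by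
  obtain rfl := domain_eq p (𝟙 S) ψ
  obtain rfl := domain_eq p f (φ ≫ ψ)
  rw [fac p f (φ ≫ ψ), p.map_comp, fac' p (𝟙 (p.obj y)) ψ]
  simp only [eqToHom_refl, Category.id_comp, Category.assoc, eqToHom_trans]
  infer_instance

end IsHomLift

lemma Adjunction.isHomLift_iff_homEquiv_symm {G : E ⥤ D} {R : D ⥤ E} (adj : G ⊣ R)
    (q : D ⥤ B) {a : B} {x : E} {z : D} [IsIso (q.map (adj.counit.app z))] (h : a ⟶ q.obj z)
    (χ : x ⟶ R.obj z) :
    (G ⋙ q).IsHomLift (h ≫ inv (q.map (adj.counit.app z))) χ ↔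
      q.IsHomLift h ((adj.homEquiv x z).symm χ) := by
  rw [IsHomLift.comp_functor_iff, IsHomLift.comp_inv_map_iff, adj.homEquiv_counit]

def Functor.IsOpfibration (p : E ⥤ B) : Prop :=
  ∀ (x : E) (b : B) (f : p.obj x ⟶ b), ∃ (y : E) (φ : x ⟶ y), p.IsStronglyCocartesian f φ

end CategoryTheory

section Fibrations

variable {p : E ⥤ B} {q : D ⥤ B} {G : E ⥤ D}

lemma isStronglyCocartesian_map_of_adjunction (hG : G ⋙ q = p) {R : D ⥤ E} (adj : G ⊣ R)
    (hc : ∀ d, IsIso (q.map (adj.counit.app d))) {x y : E} {a b : B} (f : a ⟶ b) (φ : x ⟶ y)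
    [p.IsStronglyCocartesian f φ] : q.IsStronglyCocartesian f (G.map φ) := by
  subst hG
  refine ⟨fun {z} g ψ _ => ?_⟩
  have transpose_lift : (G ⋙ q).IsHomLift (f ≫ g ≫ inv (q.map (adj.counit.app z)))
      (adj.homEquiv x z ψ) := by
    rw [← Category.assoc, adj.isHomLift_iff_homEquiv_symm, Equiv.symm_apply_apply]
    infer_instance
  refine ((adj.homEquiv y z).existsUnique_congr fun χ => ?_).2
    (IsStronglyCocartesian.universal_property (G ⋙ q) f φ (g ≫ inv (q.map (adj.counit.app z)))
      _ rfl (adj.homEquiv x z ψ))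
  rw [adj.isHomLift_iff_homEquiv_symm, Equiv.symm_apply_apply,
    ← adj.homEquiv_naturality_left, (adj.homEquiv x z).apply_eq_iff_eq]

lemma isCouniversal_fiberFunctorOfEq_of_isCouniversal (hG : G ⋙ q = p) {b : B}
    {c : p.Fiber b} {d : q.Fiber b} (e : (fiberFunctorOfEq G hG b).obj c ⟶ d)
    (he : G.IsCouniversal e.1) : (fiberFunctorOfEq G hG b).IsCouniversal e := by
  subst hG
  intro x
  constructor
  · intro σ₁ σ₂ h
    exact Fiber.hom_ext ((he x.1).injective (congrArg Subtype.val h))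
  · intro τ
    obtain ⟨χ, hχ : G.map χ ≫ e.1 = τ.1⟩ := (he x.1).surjective τ.1
    have : q.IsHomLift (𝟙 b) (G.map χ) :=
      IsHomLift.of_comp_lift_id_right q (𝟙 b) (G.map χ) e.1 e.2 (hχ ▸ τ.2)
    exact ⟨⟨χ, (IsHomLift.comp_functor_iff G q _ χ).2 this⟩, Fiber.hom_ext hχ⟩

lemma isLeftAdjoint_fiberFunctorOfEq_of_adjunction (hG : G ⋙ q = p) (hp : p.IsOpfibration)
    {R : D ⥤ E} (adj : G ⊣ R) (hc : ∀ d, IsIso (q.map (adj.counit.app d))) (b : B) :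
    (fiberFunctorOfEq G hG b).IsLeftAdjoint := by
  subst hG
  refine isLeftAdjoint_of_isCouniversal fun ⟨d, hd⟩ => ?_
  subst hd
  obtain ⟨w, ρ, hρ⟩ := hp (R.obj d) (q.obj d) (q.map (adj.counit.app d))
  have : IsIso ρ :=
    IsStronglyCocartesian.isIso_of_base_isIso (G ⋙ q) (q.map (adj.counit.app d)) ρ
  have vertical : q.IsHomLift (𝟙 (q.obj d)) (G.map (inv ρ) ≫ adj.counit.app d) := by
    simpa using (inferInstance : q.IsHomLift (inv (q.map (adj.counit.app d)) ≫
      q.map (adj.counit.app d)) (G.map (inv ρ) ≫ adj.counit.app d))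
  exact ⟨⟨w, IsHomLift.codomain_eq (G ⋙ q) (q.map (adj.counit.app d)) ρ⟩, ⟨_, vertical⟩,
    isCouniversal_fiberFunctorOfEq_of_isCouniversal rfl _
      ((adj.isCouniversal_counit d).map_comp (inv ρ))⟩

lemma injective_map_comp_of_isCouniversal_fiberFunctorOfEq (hp : (G ⋙ q).IsOpfibration)
    (hcoc : ∀ {x y : E} {a b : B} (f : a ⟶ b) (φ : x ⟶ y),
      (G ⋙ q).IsStronglyCocartesian f φ → q.IsStronglyCocartesian f (G.map φ))
    {b : B} {c : (G ⋙ q).Fiber b} {d : q.Fiber b} (e : (fiberFunctorOfEq G rfl b).obj c ⟶ d)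
    (he : (fiberFunctorOfEq G rfl b).IsCouniversal e) (x : E) :
    Function.Injective fun χ : x ⟶ c.1 => G.map χ ≫ e.1 := by
  obtain ⟨c, rfl⟩ := c
  obtain ⟨e, e_lift⟩ := e
  -- Instance search only sees through the fiber coercions once `e` has its plain type.
  change G.obj c ⟶ d.1 at e
  replace e_lift : q.IsHomLift (𝟙 ((G ⋙ q).obj c)) e := e_lift
  intro (χ₁ : x ⟶ c) (χ₂ : x ⟶ c) (h : G.map χ₁ ≫ e = G.map χ₂ ≫ e)
  have : IsIso (q.map e) := IsHomLift.isIso_map q (𝟙 ((G ⋙ q).obj c)) e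
  have same_base : (G ⋙ q).map χ₁ = (G ⋙ q).map χ₂ := (cancel_mono (q.map e)).1 <|
    (q.map_comp _ _).symm.trans ((congrArg q.map h).trans (q.map_comp _ _))
  -- `χ₁` and `χ₂` lie over the same morphism, so both factor through one cocartesian lift `φ`
  -- of it, via vertical morphisms `σ₁`, `σ₂`; these are compared in the fiber.
  obtain ⟨x', φ, hφ⟩ := hp x _ ((G ⋙ q).map χ₁)
  have := hcoc ((G ⋙ q).map χ₁) φ hφ
  have : (G ⋙ q).IsHomLift ((G ⋙ q).map χ₁) χ₂ := same_base ▸ inferInstance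
  let σ₁ := IsCocartesian.map (G ⋙ q) ((G ⋙ q).map χ₁) φ χ₁
  let σ₂ := IsCocartesian.map (G ⋙ q) ((G ⋙ q).map χ₁) φ χ₂
  have hσ₁ : φ ≫ σ₁ = χ₁ := IsCocartesian.fac (G ⋙ q) _ φ χ₁
  have hσ₂ : φ ≫ σ₂ = χ₂ := IsCocartesian.fac (G ⋙ q) _ φ χ₂
  have : G.map σ₁ ≫ e = G.map σ₂ ≫ e := by
    refine IsCocartesian.ext q ((G ⋙ q).map χ₁) (G.map φ) _ _ ?_
    rwa [← G.map_comp_assoc, ← G.map_comp_assoc, hσ₁, hσ₂]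
  have : σ₁ = σ₂ := congrArg Subtype.val
    ((he _).injective (Fiber.hom_ext this) :
      Fiber.homMk (G ⋙ q) _ σ₁ = Fiber.homMk (G ⋙ q) _ σ₂)
  rw [← hσ₁, ← hσ₂, this]

lemma surjective_map_comp_of_isCouniversal_fiberFunctorOfEq (hp : (G ⋙ q).IsOpfibration)
    (hcoc : ∀ {x y : E} {a b : B} (f : a ⟶ b) (φ : x ⟶ y),
      (G ⋙ q).IsStronglyCocartesian f φ → q.IsStronglyCocartesian f (G.map φ))
    {b : B} {c : (G ⋙ q).Fiber b} {d : q.Fiber b} (e : (fiberFunctorOfEq G rfl b).obj c ⟶ d)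
    (he : (fiberFunctorOfEq G rfl b).IsCouniversal e) (x : E) :
    Function.Surjective fun χ : x ⟶ c.1 => G.map χ ≫ e.1 := by
  obtain ⟨d, hd⟩ := d
  intro ψ
  obtain ⟨x', φ, hφ⟩ := hp x _ (q.map ψ ≫ eqToHom hd)
  have := hcoc _ φ hφ
  let τ := IsCocartesian.map q (q.map ψ ≫ eqToHom hd) (G.map φ) ψ
  have hτ : G.map φ ≫ τ = ψ := IsCocartesian.fac q _ (G.map φ) ψ
  obtain ⟨σ, hσ⟩ := (he ⟨x', IsHomLift.codomain_eq (G ⋙ q) (q.map ψ ≫ eqToHom hd) φ⟩).surjective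
    (Fiber.homMk q b τ)
  refine ⟨φ ≫ σ.1, ?_⟩
  calc G.map (φ ≫ σ.1) ≫ e.1 = G.map φ ≫ (G.map σ.1 ≫ e.1) :=
        (congrArg (· ≫ e.1) (G.map_comp φ σ.1)).trans (Category.assoc _ _ _)
    _ = G.map φ ≫ τ := congrArg (G.map φ ≫ ·) (congrArg Subtype.val hσ)
    _ = ψ := hτ

lemma exists_adjunction_of_isLeftAdjoint_fiberFunctorOfEq (hG : G ⋙ q = p) (hp : p.IsOpfibration)
    (hcoc : ∀ {x y : E} {a b : B} (f : a ⟶ b) (φ : x ⟶ y),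
      p.IsStronglyCocartesian f φ → q.IsStronglyCocartesian f (G.map φ))
    (hfib : ∀ b : B, (fiberFunctorOfEq G hG b).IsLeftAdjoint) :
    ∃ (R : D ⥤ E) (adj : G ⊣ R), ∀ d : D, IsIso (q.map (adj.counit.app d)) := by
  subst hG
  refine exists_adjunction_of_isCouniversal (fun _ _ e => IsIso (q.map e)) fun d => ?_
  let adj := Adjunction.ofIsLeftAdjoint (fiberFunctorOfEq (p := G ⋙ q) G rfl (q.obj d))
  let e := adj.counit.app ⟨d, rfl⟩
  have he := adj.isCouniversal_counit ⟨d, rfl⟩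
  have vertical : q.IsHomLift (𝟙 (q.obj d)) e.1 := e.2
  exact ⟨_, e.1, fun x =>
    ⟨injective_map_comp_of_isCouniversal_fiberFunctorOfEq hp hcoc e he x,
      surjective_map_comp_of_isCouniversal_fiberFunctorOfEq hp hcoc e he x⟩,
    IsHomLift.isIso_map q (𝟙 (q.obj d)) e.1⟩

end Fibrations

theorem relative_right_adjoint_iff_fiberwise_and_cocartesian_general
    (p : E ⥤ B) (q : D ⥤ B) (G : E ⥤ D) (hG : G ⋙ q = p)
    (hp : ∀ (x : E) (b : B) (f : p.obj x ⟶ b),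
      ∃ (y : E) (φ : x ⟶ y), p.IsStronglyCocartesian f φ) :
    (∃ (R : D ⥤ E) (adj : G ⊣ R), ∀ d : D, IsIso (q.map (adj.counit.app d))) ↔
      ((∀ {x y : E} {a b : B} (f : a ⟶ b) (φ : x ⟶ y),
          p.IsStronglyCocartesian f φ → q.IsStronglyCocartesian f (G.map φ)) ∧
        ∀ b : B, (fiberFunctorOfEq G hG b).IsLeftAdjoint) := by
  constructor
  · rintro ⟨R, adj, hc⟩
    exact ⟨fun f φ _ => isStronglyCocartesian_map_of_adjunction hG adj hc f φ,
      isLeftAdjoint_fiberFunctorOfEq_of_adjunction hG hp adj hc⟩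
  · rintro ⟨hcoc, hfib⟩
    exact exists_adjunction_of_isLeftAdjoint_fiberFunctorOfEq hG hp hcoc hfib

/-- Let `p : E ⥤ B` and `q : D ⥤ B` be Grothendieck opfibrations, and let `G : E ⥤ D` be a
functor with `G ⋙ q = p`.  Then `G` admits a right adjoint `R` whose counit components are
sent by `q` to isomorphisms if and only if `G` sends strongly cocartesian morphisms to
strongly cocartesian morphisms and, for every `b : B`, the induced functor on fibers
`E_b ⥤ D_b` admits a right adjoint. -/
theorem relative_right_adjoint_iff_fiberwise_and_cocartesian
    (p : E ⥤ B) (q : D ⥤ B) (G : E ⥤ D) (hG : G ⋙ q = p)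
    (hp : ∀ (x : E) (b : B) (f : p.obj x ⟶ b),
      ∃ (y : E) (φ : x ⟶ y), p.IsStronglyCocartesian f φ)
    (hq : ∀ (x : D) (b : B) (f : q.obj x ⟶ b),
      ∃ (y : D) (φ : x ⟶ y), q.IsStronglyCocartesian f φ) :
    (∃ (R : D ⥤ E) (adj : G ⊣ R), ∀ d : D, IsIso (q.map (adj.counit.app d))) ↔
      ((∀ {x y : E} {a b : B} (f : a ⟶ b) (φ : x ⟶ y),
          p.IsStronglyCocartesian f φ → q.IsStronglyCocartesian f (G.map φ)) ∧
        ∀ b : B, (fiberFunctorOfEq G hG b).IsLeftAdjoint) :=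
  relative_right_adjoint_iff_fiberwise_and_cocartesian_general p q G hG hp
end

section
/- Let B be a category, F, G : B ⥤ Cat functors, α : F ⟶ G a natural transformation, and ∫α : ∫F ⥤ ∫G the induced functor on Grothendieck constructions ((b, x) ↦ (b, α_b x)). Then the following are equivalent: (1) there exist a functor R : ∫G ⥤ ∫F and an adjunction ∫α ⊣ R such that the projection ∫G ⥤ B sends every component of the counit of this adjunction to an isomorphism of B; (2) for every object b of B the functor α_b : F(b) ⥤ G(b) admits a right adjoint. -/
/-!
Morphisms of `∫F` lying over an identity of `B` are exactly the morphisms of a fibre.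

If the counit of `∫α ⊣ R` lies over isomorphisms, transporting `R (b, y)` along the base of the
counit gives an object `r y` over `b`, and restricting the adjunction bijection to morphisms over
`𝟙 b` exhibits `y ↦ r y` as a right adjoint of `α_b`.

Conversely, a morphism `(b, α_b x) ⟶ (b', y)` over `t` is a morphism `G(t)(α_b x) ⟶ y`, i.e. by
naturality of `α` a morphism `α_{b'}(F(t) x) ⟶ y`, i.e. a morphism `F(t) x ⟶ R_{b'} y`: so fibrewise
right adjoints `R_b` glue to a right adjoint `(b, y) ↦ (b, R_b y)` of `∫α`, whose counit lies over
identities.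
-/

open CategoryTheory Functor

universe v u v₁ u₁

variable {B : Type u₁} [Category.{v₁} B]

namespace CategoryTheory

variable {F G : B ⥤ Cat.{v, u}}

namespace NatTrans

lemma naturality_toFunctor_obj (α : F ⟶ G) {b b' : B} (t : b ⟶ b') (x : F.obj b) :
    (α.app b').toFunctor.obj ((F.map t).toFunctor.obj x) =
      (G.map t).toFunctor.obj ((α.app b).toFunctor.obj x) :=
  Functor.congr_obj congr(($(α.naturality t)).toFunctor) x

lemma naturality_toFunctor_map (α : F ⟶ G) {b b' : B} (t : b ⟶ b') {x x' : F.obj b}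
    (φ : x ⟶ x') :
    (α.app b').toFunctor.map ((F.map t).toFunctor.map φ) =
      eqToHom (naturality_toFunctor_obj α t x) ≫
        (G.map t).toFunctor.map ((α.app b).toFunctor.map φ) ≫
          eqToHom (naturality_toFunctor_obj α t x').symm :=
  Functor.congr_hom congr(($(α.naturality t)).toFunctor) φ

end NatTrans

namespace Grothendieck

def fiberHomEquiv (b : B) (x y : F.obj b) :
    (x ⟶ y) ≃ {f : (⟨b, x⟩ : Grothendieck F) ⟶ ⟨b, y⟩ // f.base = 𝟙 b} where
  toFun φ := ⟨⟨𝟙 b, (eqToHom (by simp) ≫ φ : (F.map (𝟙 b)).toFunctor.obj x ⟶ y)⟩, rfl⟩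
  invFun f := (eqToHom (by rw [f.2, F.map_id]; rfl) ≫ f.1.fiber : x ⟶ y)
  left_inv φ := by simp
  right_inv f := Subtype.ext <| Grothendieck.ext _ _ f.2.symm (by simp)

lemma fiberHomEquiv_comp {b : B} {x y z : F.obj b} (φ : x ⟶ y) (ψ : y ⟶ z) :
    (fiberHomEquiv b x z (φ ≫ ψ)).1 = (fiberHomEquiv b x y φ).1 ≫ (fiberHomEquiv b y z ψ).1 :=
  (ι F b).map_comp φ ψ

lemma map_map_fiberHomEquiv (α : F ⟶ G) {b : B} {x y : F.obj b} (φ : x ⟶ y) :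
    (map α).map (fiberHomEquiv b x y φ).1 =
      (fiberHomEquiv b _ _ ((α.app b).toFunctor.map φ)).1 :=
  Grothendieck.ext _ _ rfl (by simp [fiberHomEquiv, eqToHom_map]; exact eqToHom_trans_assoc _ _ _)

section VerticalRestriction

variable {α : F ⟶ G} {b : B} {r : G.obj b → F.obj b}
  (e : ∀ (X : Grothendieck F) (y : G.obj b), ((map α).obj X ⟶ ⟨b, y⟩) ≃ (X ⟶ ⟨b, r y⟩))

def fiberHomEquivOfHomEquiv (he_base : ∀ X y g, (e X y g).base = g.base) (x : F.obj b)
    (y : G.obj b) : ((α.app b).toFunctor.obj x ⟶ y) ≃ (x ⟶ r y) :=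
  (fiberHomEquiv b _ y).trans <|
    ((e ⟨b, x⟩ y).subtypeEquiv fun g => by rw [he_base]).trans (fiberHomEquiv b x (r y)).symm

lemma fiberHomEquiv_fiberHomEquivOfHomEquiv (he_base : ∀ X y g, (e X y g).base = g.base)
    {x : F.obj b} {y : G.obj b} (u : (α.app b).toFunctor.obj x ⟶ y) :
    (fiberHomEquiv b x (r y) (fiberHomEquivOfHomEquiv e he_base x y u)).1 =
      e ⟨b, x⟩ y (fiberHomEquiv b _ y u).1 :=
  congrArg Subtype.val (Equiv.apply_symm_apply _ _)

theorem isLeftAdjoint_app_of_homEquiv (he_base : ∀ X y g, (e X y g).base = g.base)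
    (he_nat : ∀ X' X y (f : X' ⟶ X) g, e X' y ((map α).map f ≫ g) = f ≫ e X y g) :
    (α.app b).toFunctor.IsLeftAdjoint := by
  refine (Adjunction.adjunctionOfEquivRight (fiberHomEquivOfHomEquiv e he_base)
    fun x' x y φ u => (fiberHomEquiv b _ _).injective (Subtype.ext ?_)).isLeftAdjoint
  rw [fiberHomEquiv_fiberHomEquivOfHomEquiv, fiberHomEquiv_comp, fiberHomEquiv_comp,
    fiberHomEquiv_fiberHomEquivOfHomEquiv, ← map_map_fiberHomEquiv]
  exact he_nat _ _ _ _ _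

end VerticalRestriction

section CounitOverIsomorphisms

variable {α : F ⟶ G} {R : Grothendieck G ⥤ Grothendieck F} (adj : map α ⊣ R)

def counitTransportFiber (b : B) (y : G.obj b) : F.obj b :=
  (F.map (adj.counit.app ⟨b, y⟩).base).toFunctor.obj (R.obj ⟨b, y⟩).fiber

noncomputable def counitTransportIso (b : B) (y : G.obj b)
    [IsIso ((forget G).map (adj.counit.app ⟨b, y⟩))] :
    R.obj ⟨b, y⟩ ≅ ⟨b, counitTransportFiber adj b y⟩ :=
  isoMk (asIso ((forget G).map (adj.counit.app ⟨b, y⟩)) :) (Iso.refl _)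

noncomputable def homEquivCounitTransport {b : B} (X : Grothendieck F) (y : G.obj b)
    [IsIso ((forget G).map (adj.counit.app ⟨b, y⟩))] :
    ((map α).obj X ⟶ ⟨b, y⟩) ≃ (X ⟶ ⟨b, counitTransportFiber adj b y⟩) :=
  (adj.homEquiv X ⟨b, y⟩).trans (counitTransportIso adj b y).homToEquiv

lemma homEquivCounitTransport_base {b : B} {X : Grothendieck F} {y : G.obj b}
    [IsIso ((forget G).map (adj.counit.app ⟨b, y⟩))] (g : (map α).obj X ⟶ ⟨b, y⟩) :
    (homEquivCounitTransport adj X y g).base = g.base := by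
  conv_rhs => rw [← (adj.homEquiv X _).symm_apply_apply g, adj.homEquiv_counit]
  rfl

lemma homEquivCounitTransport_naturality_left {b : B} {X' X : Grothendieck F} {y : G.obj b}
    [IsIso ((forget G).map (adj.counit.app ⟨b, y⟩))] (f : X' ⟶ X)
    (g : (map α).obj X ⟶ ⟨b, y⟩) :
    homEquivCounitTransport adj X' y ((map α).map f ≫ g) =
      f ≫ homEquivCounitTransport adj X y g := by
  simp [homEquivCounitTransport, adj.homEquiv_naturality_left]

theorem isLeftAdjoint_app_of_isIso_counit_base
    [∀ Y, IsIso ((forget G).map (adj.counit.app Y))] (b : B) :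
    (α.app b).toFunctor.IsLeftAdjoint :=
  isLeftAdjoint_app_of_homEquiv (fun X y => homEquivCounitTransport adj X y)
    (fun _ _ => homEquivCounitTransport_base adj)
    (fun _ _ _ f g => homEquivCounitTransport_naturality_left adj f g)

end CounitOverIsomorphisms

section GluingFiberwiseAdjoints

variable (α : F ⟶ G) {Rb : ∀ b, G.obj b ⥤ F.obj b} (A : ∀ b, (α.app b).toFunctor ⊣ Rb b)

def fiberwiseTranspose {X : Grothendieck F} {Y : Grothendieck G} (t : X.base ⟶ Y.base) :
    ((G.map t).toFunctor.obj ((α.app X.base).toFunctor.obj X.fiber) ⟶ Y.fiber) ≃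
      ((F.map t).toFunctor.obj X.fiber ⟶ (Rb Y.base).obj Y.fiber) :=
  (eqToIso (α.naturality_toFunctor_obj t X.fiber).symm).homFromEquiv.trans
    ((A Y.base).homEquiv _ _)

/- Stated for a bare base/fibre pair rather than for a morphism out of `(map α).obj X`: the
projections of the latter reduce only at default transparency, which blocks `simp` in its fibres. -/
lemma fiberwiseTranspose_comp {X' X : Grothendieck F} {Y : Grothendieck G}
    (s : X'.base ⟶ X.base) (t : X.base ⟶ Y.base)
    (ψ : (F.map s).toFunctor.obj X'.fiber ⟶ X.fiber)
    (φ : (G.map t).toFunctor.obj ((α.app X.base).toFunctor.obj X.fiber) ⟶ Y.fiber) :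
    fiberwiseTranspose α A (s ≫ t) (eqToHom (by simp) ≫ (G.map t).toFunctor.map
        ((eqToHom (α.naturality s).symm).toNatTrans.app X'.fiber ≫
          (α.app X.base).toFunctor.map ψ) ≫ φ) =
      eqToHom (by simp) ≫ (F.map t).toFunctor.map ψ ≫ fiberwiseTranspose α A t φ := by
  simp [fiberwiseTranspose, ← Adjunction.homEquiv_naturality_left,
    NatTrans.naturality_toFunctor_map, eqToHom_map]

def homEquivOfFiberwise (X : Grothendieck F) (Y : Grothendieck G) :
    ((map α).obj X ⟶ Y) ≃ (X ⟶ ⟨Y.base, (Rb Y.base).obj Y.fiber⟩) where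
  toFun g := ⟨g.base, fiberwiseTranspose α A g.base g.fiber⟩
  invFun f := ⟨f.base, (fiberwiseTranspose α A f.base).symm f.fiber⟩
  left_inv g := congrArg (Hom.mk g.base) ((fiberwiseTranspose α A g.base).symm_apply_apply _)
  right_inv f := congrArg (Hom.mk f.base) ((fiberwiseTranspose α A f.base).apply_symm_apply _)

lemma homEquivOfFiberwise_naturality_left {X' X : Grothendieck F} {Y : Grothendieck G}
    (f : X' ⟶ X) (g : (map α).obj X ⟶ Y) :
    homEquivOfFiberwise α A X' Y ((map α).map f ≫ g) = f ≫ homEquivOfFiberwise α A X Y g :=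
  congrArg (Hom.mk _) (fiberwiseTranspose_comp α A f.base g.base f.fiber g.fiber)

noncomputable def adjunctionOfFiberwise :
    map α ⊣ Adjunction.rightAdjointOfEquiv (homEquivOfFiberwise α A)
      fun _ _ _ => homEquivOfFiberwise_naturality_left α A :=
  Adjunction.adjunctionOfEquivRight _ _

lemma adjunctionOfFiberwise_counit_app_base (Y : Grothendieck G) :
    ((adjunctionOfFiberwise α A).counit.app Y).base = 𝟙 Y.base :=
  rfl

end GluingFiberwiseAdjoints

end Grothendieck

end CategoryTheory

/-- For a natural transformation `α : F ⟶ G` of functors `F G : B ⥤ Cat`, the induced functor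
`∫α : ∫F ⥤ ∫G` on Grothendieck constructions admits a right adjoint whose adjunction counit
has all of its components sent to isomorphisms by the projection `∫G ⥤ B` if and only if the
component `α.app b : F(b) ⥤ G(b)` admits a right adjoint for every `b : B`. -/
theorem grothendieck_map_left_adjoint_iff_fiberwise
    (F G : B ⥤ Cat.{v, u}) (α : F ⟶ G) :
    (∃ (R : Grothendieck G ⥤ Grothendieck F) (adj : Grothendieck.map α ⊣ R),
        ∀ X : Grothendieck G, IsIso ((Grothendieck.forget G).map (adj.counit.app X))) ↔
      ∀ b : B, (α.app b).toFunctor.IsLeftAdjoint := by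
  refine ⟨fun ⟨_, adj, _⟩ => Grothendieck.isLeftAdjoint_app_of_isIso_counit_base adj,
    fun _ => ?_⟩
  let A b := Adjunction.ofIsLeftAdjoint (α.app b).toFunctor
  refine ⟨_, Grothendieck.adjunctionOfFiberwise α A, fun Y => ?_⟩
  rw [Grothendieck.forget_map, Grothendieck.adjunctionOfFiberwise_counit_app_base]
  exact IsIso.id _
end

section
/- Let A, B, E be categories and π : E ⥤ A × B a functor; write π_A = π ⋙ pr_A and π_B = π ⋙ pr_B. Assume that (i) for every object x of E and every morphism f : π_A(x) → a of A there exists a morphism of E with source x lying over f which is strongly cocartesian for π_A, and (ii) π_B sends every π_A-strongly-cocartesian morphism of E to an isomorphism of B. Let a be an object of A and let φ : x → y be a morphism of E with π_A(φ) = id_a which, viewed as a morphism of the fiber E_a of π_A over a, is strongly cartesian for the restriction of π_B to E_a. Then φ is strongly cartesian for π_B : E ⥤ B. -/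
/-!
Given `ψ : z ⟶ Y` over `h ≫ g`, let `θ : z ⟶ W` be a strongly cocartesian lift of `π_A ψ`.
Precomposition with `θ` identifies morphisms of the fiber `W ⟶ V` with morphisms `z ⟶ V` over
`π_A ψ`, and since `π_B θ` is invertible it turns lifts of `k` into lifts of `(π_B θ)⁻¹ ≫ k`.
So the universal property of `φ` against `z` is the fiberwise universal property against `W`.
-/

open CategoryTheory Functor

universe v₁ v₂ v₃ u₁ u₂ u₃

variable {A : Type u₁} {B : Type u₂} {E : Type u₃}
  [Category.{v₁} A] [Category.{v₂} B] [Category.{v₃} E]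

namespace CategoryTheory

variable {p : E ⥤ A} {q : E ⥤ B}

lemma IsHomLift.of_comp_lift_id_right_s10 {R S : A} {x y z : E} {f : R ⟶ S} {χ : x ⟶ y} {φ : y ⟶ z}
    [p.IsHomLift f (χ ≫ φ)] [p.IsHomLift (𝟙 S) φ] : p.IsHomLift f χ := by
  have hfac := IsHomLift.fac' p f (χ ≫ φ)
  rw [p.map_comp, IsHomLift.fac' p (𝟙 S) φ] at hfac
  apply IsHomLift.of_commsq p f χ (IsHomLift.domain_eq p f (χ ≫ φ))
    (IsHomLift.domain_eq p (𝟙 S) φ)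
  simpa using congrArg (· ≫ eqToHom (IsHomLift.codomain_eq p f (χ ≫ φ))) hfac

lemma IsHomLift.comp_iff_of_isIso_map {b : B} {z w x : E} (θ : z ⟶ w) [IsIso (q.map θ)]
    (σ : w ⟶ x) (h : q.obj z ⟶ b) :
    q.IsHomLift h (θ ≫ σ) ↔ q.IsHomLift (inv (q.map θ) ≫ h) σ := by
  constructor
  · intro
    apply IsHomLift.of_fac' q _ σ rfl (IsHomLift.codomain_eq q h (θ ≫ σ))
    rw [eqToHom_refl, Category.id_comp, Category.assoc, IsIso.eq_inv_comp, ← q.map_comp,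
      IsHomLift.fac' q h (θ ≫ σ), eqToHom_refl, Category.id_comp]
  · intro
    rw [← IsIso.hom_inv_id_assoc (q.map θ) h]
    infer_instance

namespace Functor

lemma Fiber.isHomLift_fiberInclusion_comp_iff {a : A} {X Y : p.Fiber a} (φ : X ⟶ Y)
    {b b' : B} (g : b ⟶ b') :
    (fiberInclusion ⋙ q).IsHomLift g φ ↔ q.IsHomLift g (fiberInclusion.map φ) := by
  constructor
  · rintro ⟨⟩
    exact inferInstanceAs (q.IsHomLift (q.map _) _)
  · rintro ⟨⟩
    exact inferInstanceAs ((fiberInclusion ⋙ q).IsHomLift ((fiberInclusion ⋙ q).map φ) φ)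

lemma IsStronglyCocartesian.existsUnique_fiber_hom {R a : A} {z : E} {W Y : p.Fiber a}
    (f : R ⟶ a) (θ : z ⟶ Fiber.fiberInclusion.obj W) [p.IsStronglyCocartesian f θ]
    (ψ : z ⟶ Fiber.fiberInclusion.obj Y) [p.IsHomLift f ψ] :
    ∃! τ : W ⟶ Y, θ ≫ Fiber.fiberInclusion.map τ = ψ := by
  have hf : f = f ≫ 𝟙 a := (Category.comp_id f).symm
  have hτ := IsStronglyCocartesian.map_isHomLift p f θ hf ψ
  refine ⟨⟨_, hτ⟩, IsStronglyCocartesian.fac p f θ hf ψ, fun τ hτ => Fiber.hom_ext ?_⟩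
  exact IsStronglyCocartesian.map_uniq p f θ hf ψ _ hτ

end Functor

theorem isStronglyCartesian_fiberInclusion_map
    (hlift : ∀ (x : E) (a : A) (f : p.obj x ⟶ a),
      ∃ (y : E) (θ : x ⟶ y), p.IsStronglyCocartesian f θ)
    (hiso : ∀ {x y : E} {a a' : A} (f : a ⟶ a') (θ : x ⟶ y),
      p.IsStronglyCocartesian f θ → IsIso (q.map θ))
    {a : A} {X Y : p.Fiber a} (φ : X ⟶ Y) {b b' : B} (g : b ⟶ b')
    [(Fiber.fiberInclusion ⋙ q).IsStronglyCartesian g φ] :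
    q.IsStronglyCartesian g (Fiber.fiberInclusion.map φ) := by
  have : q.IsHomLift g (Fiber.fiberInclusion.map φ) :=
    (Fiber.isHomLift_fiberInclusion_comp_iff φ g).mp inferInstance
  refine ⟨fun {z} h ψ _ => ?_⟩
  obtain ⟨f, _⟩ : ∃ f : p.obj z ⟶ a, p.IsHomLift f ψ :=
    ⟨_, IsHomLift.lift_comp_eqToHom p (p.map ψ) ψ Y.2⟩
  obtain ⟨W, θ, _⟩ : ∃ (W : p.Fiber a) (θ : z ⟶ Fiber.fiberInclusion.obj W),
      p.IsStronglyCocartesian f θ := by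
    obtain ⟨w, θ, hθ⟩ := hlift z a f
    exact ⟨⟨w, IsHomLift.codomain_eq p f θ⟩, θ, hθ⟩
  have := hiso f θ ‹_›
  have lift_iff (V : p.Fiber a) (σ : W ⟶ V) {c : B} (k : q.obj z ⟶ c) :
      q.IsHomLift k (θ ≫ Fiber.fiberInclusion.map σ) ↔
        (Fiber.fiberInclusion ⋙ q).IsHomLift (inv (q.map θ) ≫ k) σ := by
    rw [IsHomLift.comp_iff_of_isIso_map, Fiber.isHomLift_fiberInclusion_comp_iff]
  obtain ⟨τ, hτ, τ_uniq⟩ := IsStronglyCocartesian.existsUnique_fiber_hom f θ ψ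
  have : (Fiber.fiberInclusion ⋙ q).IsHomLift ((inv (q.map θ) ≫ h) ≫ g) τ := by
    rwa [Category.assoc, ← lift_iff, hτ]
  obtain ⟨σ, ⟨_, hσ⟩, σ_uniq⟩ := IsStronglyCartesian.universal_property
    (Fiber.fiberInclusion ⋙ q) g φ (inv (q.map θ) ≫ h) _ rfl τ
  refine ⟨θ ≫ Fiber.fiberInclusion.map σ, ⟨(lift_iff X σ h).mpr ‹_›, ?_⟩, ?_⟩
  · rw [Category.assoc, ← Functor.map_comp, hσ, hτ]
  · rintro χ ⟨_, hχ⟩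
    have : p.IsHomLift f (χ ≫ Fiber.fiberInclusion.map φ) := hχ ▸ ‹p.IsHomLift f ψ›
    have : p.IsHomLift f χ := IsHomLift.of_comp_lift_id_right_s10 (φ := Fiber.fiberInclusion.map φ)
    obtain ⟨σ', hσ', -⟩ := IsStronglyCocartesian.existsUnique_fiber_hom (Y := X) f θ χ
    have : (Fiber.fiberInclusion ⋙ q).IsHomLift (inv (q.map θ) ≫ h) σ' :=
      (lift_iff X σ' h).mp (hσ' ▸ ‹_›)
    have : σ' ≫ φ = τ :=
      τ_uniq _ (by dsimp only; rw [Functor.map_comp, ← Category.assoc, hσ', hχ])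
    rw [← hσ', σ_uniq σ' ⟨‹_›, this⟩]

end CategoryTheory

/-- Let `π : E ⥤ A × B` be a functor such that `π_A := π ⋙ pr_A` admits strongly cocartesian
lifts of all morphisms out of the image of any object, and such that `π_B := π ⋙ pr_B` sends
every `π_A`-strongly-cocartesian morphism to an isomorphism.  If a morphism `φ` of the fiber
of `π_A` over `a : A` is strongly cartesian for the restriction of `π_B` to this fiber, then
the underlying morphism of `E` is strongly cartesian for `π_B`. -/
theorem fiberwise_stronglyCartesian_is_stronglyCartesian (π : E ⥤ A × B)
    (hlift : ∀ (x : E) (a : A) (f : (π ⋙ CategoryTheory.Prod.fst A B).obj x ⟶ a),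
      ∃ (y : E) (φ : x ⟶ y), (π ⋙ CategoryTheory.Prod.fst A B).IsStronglyCocartesian f φ)
    (hiso : ∀ {x y : E} {a a' : A} (f : a ⟶ a') (φ : x ⟶ y),
      (π ⋙ CategoryTheory.Prod.fst A B).IsStronglyCocartesian f φ →
        IsIso ((π ⋙ CategoryTheory.Prod.snd A B).map φ))
    (a : A) {X Y : (π ⋙ CategoryTheory.Prod.fst A B).Fiber a} (φ : X ⟶ Y)
    {b b' : B} (g : b ⟶ b')
    (hφ : (Fiber.fiberInclusion ⋙ (π ⋙ CategoryTheory.Prod.snd A B)).IsStronglyCartesian g φ) :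
    (π ⋙ CategoryTheory.Prod.snd A B).IsStronglyCartesian g (Fiber.fiberInclusion.map φ) :=
  isStronglyCartesian_fiberInclusion_map hlift hiso φ g
end
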